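/- arXiv:2311.18263 — 10 statements merged into one kernel-verified Lean document; each statement's English description precedes it below -/
import Mathlib

section
/- Under Assumption (A), there exist constants κ > 0 and λ > 0, independent of the starting point, such that for every x = (q,p) ∈ ℝ^d × ℝ^d and every t ≥ 0, any solution X_t(x) of the zero-noise underdamped dynamics with X_0(x) = x satisfies |X_t(x)|² ≤ κ (|x|² + U(q)) e^{−λ t}. -/
local notation "⟪" x ", " y "⟫" => @inner ℝ _ _ x y

set_option maxHeartbeats 1000000


/-- Theorem 2.2 / global exponential stability.
Under Assumption (A), there exist constants `κ > 0` and `lam > 0`, independent of the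
starting point, such that for every `x = (q₀, p₀)` and every `t ≥ 0`, any solution
`X_t(x) = (q t, p t)` of the zero-noise underdamped dynamics with `X_0(x) = x` satisfies
`|X_t(x)|² ≤ κ (|x|² + U q₀) e^{−lam t}`. -/
theorem stmt0 (d : ℕ) (hd : 1 ≤ d) (γ : ℝ) (hγ : 0 < γ)
    (F : EuclideanSpace ℝ (Fin d) → EuclideanSpace ℝ (Fin d))
    (U : EuclideanSpace ℝ (Fin d) → ℝ)
    (L : EuclideanSpace ℝ (Fin d) → EuclideanSpace ℝ (Fin d))
    (α β : ℝ)
    (hF : ContDiff ℝ 3 F) (hU : ContDiff ℝ 4 U) (hU0 : ∀ q, 0 ≤ U q)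
    (hL : ContDiff ℝ 3 L)
    (hdec : ∀ q, F q = gradient U q + L q)
    (hα : 0 < α) (hβ0 : 0 < β) (hβγ : β < γ)
    (hcoer : ∀ q, (inner ℝ (F q) q : ℝ) ≥ α * (‖q‖ ^ 2 + U q) + ‖L q‖ ^ 2 / β ^ 2) :
    ∃ κ > (0 : ℝ), ∃ lam > (0 : ℝ),
      ∀ (x : EuclideanSpace ℝ (Fin d) × EuclideanSpace ℝ (Fin d))
        (q p : ℝ → EuclideanSpace ℝ (Fin d)),
        q 0 = x.1 → p 0 = x.2 →
        (∀ t : ℝ, HasDerivAt q (p t) t) →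
        (∀ t : ℝ, HasDerivAt p (-F (q t) - γ • p t) t) →
        ∀ t ≥ (0 : ℝ),
          ‖q t‖ ^ 2 + ‖p t‖ ^ 2 ≤
            κ * (‖x.1‖ ^ 2 + ‖x.2‖ ^ 2 + U x.1) * Real.exp (-lam * t) := by
  obtain ⟨ε, hεdef⟩ : ∃ ε : ℝ, ε = β / 2 := ⟨_, rfl⟩
  have hε0 : 0 < ε := by rw [hεdef]; positivity
  obtain ⟨ap, hapdef⟩ : ∃ ap : ℝ, ap = 1/2 + β/4 := ⟨_, rfl⟩
  obtain ⟨aq, haqdef⟩ : ∃ aq : ℝ, aq = β * (1 + γ) / 4 := ⟨_, rfl⟩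
  have hap0 : 0 < ap := by rw [hapdef]; positivity
  have haq0 : 0 < aq := by rw [haqdef]; positivity
  obtain ⟨m, hmdef⟩ : ∃ m : ℝ, m = min (1/2 - β/(2*γ)) (β*γ/8) := ⟨_, rfl⟩
  have hm0 : 0 < m := by
    rw [hmdef]
    apply lt_min
    · rw [sub_pos, div_lt_iff₀ (by positivity)]
      nlinarith
    · positivity
  obtain ⟨lam, hlamdef⟩ : ∃ lam : ℝ, lam = min ((γ-β)/ap) (min ((α*β/2)/aq) (α*β/2)) := ⟨_, rfl⟩
  have hlam0 : 0 < lam := by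
    rw [hlamdef]
    apply lt_min
    · apply div_pos (by linarith) hap0
    · exact lt_min (div_pos (by positivity) haq0) (by positivity)
  obtain ⟨M, hMdef⟩ : ∃ M : ℝ, M = max ap (max aq 1) := ⟨_, rfl⟩
  have hM0 : 0 < M := hMdef ▸ lt_of_lt_of_le hap0 (le_max_left _ _)
  refine ⟨M/m, by positivity, lam, hlam0, ?_⟩
  intro x q p hq0 hp0 hq hp t ht
  have hUdiff : Differentiable ℝ U := hU.differentiable (by norm_num)
  obtain ⟨V, hVdef⟩ : ∃ V : ℝ → ℝ,
      V = fun u => U (q u) + ⟪p u, p u⟫/2 + ε * ⟪q u, p u⟫ + (ε*γ/2) * ⟪q u, q u⟫ := ⟨_, rfl⟩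
  obtain ⟨W, hWdef⟩ : ∃ W : ℝ → ℝ,
      W = fun u => -⟪L (q u), p u⟫ - (γ-ε)*⟪p u, p u⟫ - ε*⟪F (q u), q u⟫ := ⟨_, rfl⟩
  have hVderiv : ∀ s : ℝ, HasDerivAt V (W s) s := by
    intro s
    have h1 : HasDerivAt (fun u => U (q u)) (⟪gradient U (q s), p s⟫) s := by
      have := ((hUdiff (q s)).hasGradientAt.hasFDerivAt).comp_hasDerivAt s (hq s)
      simpa [InnerProductSpace.toDual_apply_apply, Function.comp_def] using this
    have h2 := (hp s).inner ℝ (hp s)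
    have h3 := (hq s).inner ℝ (hp s)
    have h4 := (hq s).inner ℝ (hq s)
    have H := ((h1.add (h2.div_const 2)).add (h3.const_mul ε)).add (h4.const_mul (ε*γ/2))
    rw [hVdef]; refine H.congr_deriv ?_
    have hgrad : gradient U (q s) = F (q s) - L (q s) := by rw [hdec]; abel
    simp only [hWdef, hgrad, inner_sub_left, inner_sub_right, inner_neg_left, inner_neg_right,
      real_inner_smul_left, real_inner_smul_right, real_inner_comm (p s) (q s),
      real_inner_comm (F (q s)) (p s), real_inner_comm (F (q s)) (q s),
      real_inner_comm (L (q s)) (p s)]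
    ring
  -- pointwise comparison facts
  have hlam_ap : lam * ap ≤ γ - β := by
    rw [← le_div_iff₀ hap0, hlamdef]; exact min_le_left _ _
  have hlam_aq : lam * aq ≤ α*β/2 := by
    rw [← le_div_iff₀ haq0, hlamdef]; exact (min_le_right _ _).trans (min_le_left _ _)
  have hlam_U : lam ≤ α*β/2 := hlamdef ▸ (min_le_right _ _).trans (min_le_right _ _)
  have hVub : ∀ s : ℝ, V s ≤ U (q s) + ap * ‖p s‖^2 + aq * ‖q s‖^2 := by
    intro s
    have hcs : |⟪q s, p s⟫| ≤ ‖q s‖ * ‖p s‖ := abs_real_inner_le_norm _ _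
    have h1 : ⟪q s, p s⟫ ≤ ‖q s‖ * ‖p s‖ := (le_abs_self _).trans hcs
    have hqq : ⟪q s, q s⟫ = ‖q s‖^2 := real_inner_self_eq_norm_sq _
    have hpp : ⟪p s, p s⟫ = ‖p s‖^2 := real_inner_self_eq_norm_sq _
    simp only [hVdef, hqq, hpp, hεdef, hapdef, haqdef]
    nlinarith [sq_nonneg (‖q s‖ - ‖p s‖), norm_nonneg (q s), norm_nonneg (p s)]
  have hVlb : ∀ s : ℝ, m * (‖q s‖^2 + ‖p s‖^2) ≤ V s := by
    intro s
    have hcs : |⟪q s, p s⟫| ≤ ‖q s‖ * ‖p s‖ := abs_real_inner_le_norm _ _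
    have h1 : -(‖q s‖ * ‖p s‖) ≤ ⟪q s, p s⟫ := neg_le_of_abs_le hcs
    have hqq : ⟪q s, q s⟫ = ‖q s‖^2 := real_inner_self_eq_norm_sq _
    have hpp : ⟪p s, p s⟫ = ‖p s‖^2 := real_inner_self_eq_norm_sq _
    have hm1 : m ≤ 1/2 - β/(2*γ) := hmdef ▸ min_le_left _ _
    have hm2 : m ≤ β*γ/8 := hmdef ▸ min_le_right _ _
    have hU0' := hU0 (q s)
    -- ε ‖q‖‖p‖ ≤ (εγ/4)‖q‖² + (ε/γ)‖p‖²
    have hyoung : ε * (‖q s‖ * ‖p s‖) ≤ (ε*γ/4) * ‖q s‖^2 + (ε/γ) * ‖p s‖^2 := by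
      have hid : (ε*γ/4) * ‖q s‖^2 + (ε/γ) * ‖p s‖^2 - ε * (‖q s‖ * ‖p s‖)
          = (ε/γ) * (γ/2 * ‖q s‖ - ‖p s‖)^2 := by
        field_simp; ring
      have hnn : 0 ≤ (ε/γ) * (γ/2 * ‖q s‖ - ‖p s‖)^2 := by positivity
      linarith
    have hεqp : -((ε*γ/4) * ‖q s‖^2 + (ε/γ) * ‖p s‖^2) ≤ ε * ⟪q s, p s⟫ := by
      have h2 : ε * (-(‖q s‖ * ‖p s‖)) ≤ ε * ⟪q s, p s⟫ :=
        mul_le_mul_of_nonneg_left h1 hε0.le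
      linarith
    have hb2 : β/(2*γ) = ε/γ := by rw [hεdef]; ring
    have hb3 : β*γ/8 = ε*γ/4 := by rw [hεdef]; ring
    rw [hb2] at hm1
    rw [hb3] at hm2
    have k1 : m * ‖q s‖^2 ≤ (ε*γ/4) * ‖q s‖^2 :=
      mul_le_mul_of_nonneg_right hm2 (sq_nonneg _)
    have k2 : m * ‖p s‖^2 ≤ (1/2 - ε/γ) * ‖p s‖^2 :=
      mul_le_mul_of_nonneg_right hm1 (sq_nonneg _)
    simp only [hVdef, hqq, hpp]
    nlinarith
  have hWV : ∀ s : ℝ, W s + lam * V s ≤ 0 := by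
    intro s
    have hcoer' := hcoer (q s)
    have hcsL : |⟪L (q s), p s⟫| ≤ ‖L (q s)‖ * ‖p s‖ := abs_real_inner_le_norm _ _
    have h1 : -⟪L (q s), p s⟫ ≤ ‖L (q s)‖ * ‖p s‖ := by
      have := neg_le_of_abs_le hcsL; linarith [neg_abs_le (⟪L (q s), p s⟫)]
    have hpp : ⟪p s, p s⟫ = ‖p s‖^2 := real_inner_self_eq_norm_sq _
    have hU0' := hU0 (q s)
    have hVub' := hVub s
    have hyoung : ‖L (q s)‖ * ‖p s‖ ≤ ‖L (q s)‖^2/(2*β) + (β/2) * ‖p s‖^2 := by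
      have hsq := sq_nonneg (‖L (q s)‖ - β * ‖p s‖)
      rw [div_add' _ _ _ (by positivity), le_div_iff₀ (by positivity)]
      nlinarith
    -- W s ≤ -(γ-β)‖p‖² - (αβ/2)(‖q‖² + U)
    have hW : W s ≤ -(γ-β) * ‖p s‖^2 - (α*β/2) * (‖q s‖^2 + U (q s)) := by
      simp only [hWdef, hpp]
      have hFq : ε * ⟪F (q s), q s⟫ ≥ ε * (α * (‖q s‖ ^ 2 + U (q s)) + ‖L (q s)‖ ^ 2 / β ^ 2) :=
        mul_le_mul_of_nonneg_left hcoer' (le_of_lt hε0)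
      have hεL : ε * (‖L (q s)‖ ^ 2 / β ^ 2) = ‖L (q s)‖^2/(2*β) := by
        rw [hεdef]; field_simp
      have hεα : ε * (α * (‖q s‖ ^ 2 + U (q s))) = (α*β/2) * (‖q s‖^2 + U (q s)) := by
        rw [hεdef]; ring
      nlinarith [hFq, h1.trans hyoung]
    have hlamV : lam * V s ≤ (α*β/2) * U (q s) + (γ-β) * ‖p s‖^2 + (α*β/2) * ‖q s‖^2 := by
      have h2 : lam * V s ≤ lam * (U (q s) + ap * ‖p s‖^2 + aq * ‖q s‖^2) :=
        mul_le_mul_of_nonneg_left hVub' (le_of_lt hlam0)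
      have h3 : lam * (U (q s) + ap * ‖p s‖^2 + aq * ‖q s‖^2)
          ≤ (α*β/2) * U (q s) + (γ-β) * ‖p s‖^2 + (α*β/2) * ‖q s‖^2 := by
        have := sq_nonneg (‖p s‖); have := sq_nonneg (‖q s‖)
        nlinarith [mul_le_mul_of_nonneg_right hlam_ap (sq_nonneg (‖p s‖)),
          mul_le_mul_of_nonneg_right hlam_aq (sq_nonneg (‖q s‖)),
          mul_le_mul_of_nonneg_right hlam_U hU0']
      linarith
    nlinarith
  -- Gronwall via antitone
  obtain ⟨g, hgdef⟩ : ∃ g : ℝ → ℝ, g = fun u => V u * Real.exp (lam * u) := ⟨_, rfl⟩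
  have hgderiv : ∀ s : ℝ, HasDerivAt g ((W s + lam * V s) * Real.exp (lam * s)) s := by
    intro s
    have he : HasDerivAt (fun u => Real.exp (lam * u)) (lam * Real.exp (lam * s)) s := by
      have := ((hasDerivAt_id s).const_mul lam).exp
      simpa [mul_comm] using this
    have := (hVderiv s).mul he
    rw [hgdef]; exact this.congr_deriv (by ring)
  have hanti : Antitone g := by
    apply antitone_of_deriv_nonpos
    · intro s; exact (hgderiv s).differentiableAt
    · intro s
      rw [(hgderiv s).deriv]
      exact mul_nonpos_of_nonpos_of_nonneg (hWV s) (Real.exp_nonneg _)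
  have hVt : V t * Real.exp (lam * t) ≤ V 0 := by
    have h := hanti ht
    rw [hgdef] at h
    simpa using h
  have hV0 : V 0 ≤ M * (‖x.1‖ ^ 2 + ‖x.2‖ ^ 2 + U x.1) := by
    have h := hVub 0
    rw [hq0, hp0] at h
    have hMa : ap ≤ M := hMdef ▸ le_max_left _ _
    have hMq : aq ≤ M := hMdef ▸ (le_max_left _ _).trans (le_max_right _ _)
    have hM1 : (1:ℝ) ≤ M := hMdef ▸ (le_max_right _ _).trans (le_max_right _ _)
    nlinarith [sq_nonneg ‖x.1‖, sq_nonneg ‖x.2‖, hU0 x.1]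
  have hexp : (0:ℝ) < Real.exp (lam * t) := Real.exp_pos _
  have key : m * (‖q t‖^2 + ‖p t‖^2) ≤ M * (‖x.1‖ ^ 2 + ‖x.2‖ ^ 2 + U x.1) * Real.exp (-lam * t) := by
    have h1 : m * (‖q t‖^2 + ‖p t‖^2) ≤ V t := hVlb t
    have h2 : V t ≤ V 0 * Real.exp (-lam * t) := by
      rw [neg_mul, Real.exp_neg, ← div_eq_mul_inv, le_div_iff₀ hexp]
      exact hVt
    have h3 : V 0 * Real.exp (-lam * t) ≤ M * (‖x.1‖ ^ 2 + ‖x.2‖ ^ 2 + U x.1) * Real.exp (-lam * t) :=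
      mul_le_mul_of_nonneg_right hV0 (Real.exp_nonneg _)
    linarith
  have := (div_le_div_iff_of_pos_right hm0).mpr key
  calc ‖q t‖ ^ 2 + ‖p t‖ ^ 2
      = m * (‖q t‖^2 + ‖p t‖^2) / m := by field_simp
    _ ≤ M * (‖x.1‖ ^ 2 + ‖x.2‖ ^ 2 + U x.1) * Real.exp (-lam * t) / m := this
    _ = M / m * (‖x.1‖ ^ 2 + ‖x.2‖ ^ 2 + U x.1) * Real.exp (-lam * t) := by ring
end

section
/- Let M be a d×d real matrix and γ > 0. All complex eigenvalues of the 2d×2d block matrix T_M = [[0, −I_d],[M, γ I_d]] have positive real part if and only if every complex eigenvalue a + ib of M (a, b ∈ ℝ) satisfies a > 0 and γ² a > b². -/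
/-!
Reading off the two block rows, `(x, y)` is an eigenvector of `T_M` for `z` iff `y = -z x` and
`x` is an eigenvector of `M` for `z (γ - z)`. So the left side says that for every eigenvalue `μ`
of `M` both roots `w`, `γ - w` of `w (γ - w) = μ` have positive real part, and the identity
`γ² Re μ - (Im μ)² = Re w · Re (γ - w) · (γ² + 4 (Im w)²)` turns this into the right side.
-/

open Matrix

namespace Matrix

theorem mem_spectrum_iff_exists_mulVec_eq_smul {K n : Type*} [Field K] [Fintype n]
    [DecidableEq n] (A : Matrix n n K) (μ : K) :
    μ ∈ spectrum K A ↔ ∃ v ≠ 0, A *ᵥ v = μ • v := by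
  rw [spectrum.mem_iff, isUnit_iff_isUnit_det, isUnit_iff_ne_zero, not_not,
    ← exists_mulVec_eq_zero_iff]
  simp only [sub_mulVec, Algebra.algebraMap_eq_smul_one, smul_mulVec, one_mulVec, sub_eq_zero,
    eq_comm]

theorem mem_spectrum_fromBlocks_zero_neg_one_iff {K n : Type*} [Field K] [Fintype n]
    [DecidableEq n] (A : Matrix n n K) (c z : K) :
    z ∈ spectrum K (fromBlocks (0 : Matrix n n K) (-1) A (c • (1 : Matrix n n K))) ↔
      z * (c - z) ∈ spectrum K A := by
  simp only [mem_spectrum_iff_exists_mulVec_eq_smul]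
  constructor
  · rintro ⟨v, hv, hAv⟩
    obtain ⟨x, y, rfl⟩ : ∃ x y, v = Sum.elim x y := ⟨_, _, (Sum.elim_comp_inl_inr v).symm⟩
    simp only [fromBlocks_mulVec, Sum.elim_comp_inl, Sum.elim_comp_inr, zero_mulVec, neg_mulVec,
      one_mulVec, smul_mulVec, zero_add] at hAv
    have hzx : -y = z • x := funext fun i => congrFun hAv (Sum.inl i)
    have hy : y = -z • x := by rw [neg_smul, ← hzx, neg_neg]
    have hAx : A *ᵥ x + c • y = z • y := funext fun i => congrFun hAv (Sum.inr i)
    refine ⟨x, fun hx => hv ?_, ?_⟩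
    · rw [hy, hx, smul_zero, Sum.elim_zero_zero]
    · calc A *ᵥ x = (z - c) • y := by rw [sub_smul, ← hAx, add_sub_cancel_right]
        _ = (z * (c - z)) • x := by rw [hy, smul_smul]; congr 1; ring
  · rintro ⟨x, hx, hAx⟩
    refine ⟨Sum.elim x (-z • x), fun h => hx (funext fun i => congrFun h (Sum.inl i)), ?_⟩
    simp only [fromBlocks_mulVec, Sum.elim_comp_inl, Sum.elim_comp_inr, zero_mulVec, neg_mulVec,
      one_mulVec, smul_mulVec, zero_add, hAx]
    ext (i | i)
    · simp
    · simp only [Sum.elim_inr, Pi.add_apply, Pi.smul_apply, Pi.neg_apply, neg_smul, smul_eq_mul]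
      ring

end Matrix

namespace Complex

theorem re_mul_ofReal_sub_self (γ : ℝ) (w : ℂ) :
    (w * (γ - w)).re = w.re * (γ - w.re) + w.im ^ 2 := by
  simp only [mul_re, sub_re, sub_im, ofReal_re, ofReal_im]
  ring

theorem sq_mul_re_sub_sq_im_mul_ofReal_sub_self (γ : ℝ) (w : ℂ) :
    γ ^ 2 * (w * (γ - w)).re - (w * (γ - w)).im ^ 2 =
      w.re * (γ - w.re) * (γ ^ 2 + 4 * w.im ^ 2) := by
  simp only [mul_re, mul_im, sub_re, sub_im, ofReal_re, ofReal_im]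
  ring

theorem forall_re_pos_of_mul_ofReal_sub_self_eq_iff {γ : ℝ} (hγ : 0 < γ) (μ : ℂ) :
    (∀ w : ℂ, w * (γ - w) = μ → 0 < w.re) ↔ 0 < μ.re ∧ μ.im ^ 2 < γ ^ 2 * μ.re := by
  constructor
  · intro h
    obtain ⟨s, hs⟩ := IsAlgClosed.exists_eq_mul_self ((γ : ℂ) ^ 2 - 4 * μ)
    have hw : (γ + s) / 2 * (γ - (γ + s) / 2) = μ := by linear_combination hs / 4
    set w := ((γ : ℂ) + s) / 2
    have hre : 0 < w.re := h w hw
    have hre' : 0 < γ - w.re := by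
      simpa using h (γ - w) (by rw [sub_sub_cancel, mul_comm, hw])
    subst hw
    refine ⟨by rw [re_mul_ofReal_sub_self]; positivity, sub_pos.mp ?_⟩
    rw [sq_mul_re_sub_sq_im_mul_ofReal_sub_self]
    positivity
  · rintro ⟨-, h⟩ w rfl
    have hfactor := sq_mul_re_sub_sq_im_mul_ofReal_sub_self γ w
    have : 0 < w.re * (γ - w.re) :=
      pos_of_mul_pos_left (b := γ ^ 2 + 4 * w.im ^ 2) (by linarith) (by positivity)
    nlinarith

end Complex

theorem stmt1_general (d : ℕ) (γ : ℝ) (hγ : 0 < γ)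
    (M : Matrix (Fin d) (Fin d) ℝ) :
    (∀ z ∈ spectrum ℂ
        (((Matrix.fromBlocks (0 : Matrix (Fin d) (Fin d) ℝ) (-1) M (γ • 1)).map
            Complex.ofReal : Matrix (Fin d ⊕ Fin d) (Fin d ⊕ Fin d) ℂ)),
      0 < z.re)
    ↔ (∀ z ∈ spectrum ℂ ((M.map Complex.ofReal : Matrix (Fin d) (Fin d) ℂ)),
        0 < z.re ∧ z.im ^ 2 < γ ^ 2 * z.re) := by
  have hmap : (fromBlocks (0 : Matrix (Fin d) (Fin d) ℝ) (-1) M (γ • 1)).map Complex.ofReal =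
      fromBlocks 0 (-1) (M.map Complex.ofReal) ((γ : ℂ) • (1 : Matrix (Fin d) (Fin d) ℂ)) := by
    simp [fromBlocks_map, Matrix.map_neg, Matrix.map_smul]
  simp only [hmap, mem_spectrum_fromBlocks_zero_neg_one_iff,
    ← Complex.forall_re_pos_of_mul_ofReal_sub_self_eq_iff hγ]
  exact ⟨fun h μ hμ w hw => h w (hw ▸ hμ), fun h z hz => h _ hz z rfl⟩

/-- Lemma 3.1. All complex eigenvalues of the block matrix
`T_M = [[0, −I],[M, γ I]]` have positive real part iff every complex eigenvalue
`a + ib` of `M` satisfies `a > 0` and `γ² a > b²`. -/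
theorem stmt1 (d : ℕ) (hd : 1 ≤ d) (γ : ℝ) (hγ : 0 < γ)
    (M : Matrix (Fin d) (Fin d) ℝ) :
    (∀ z ∈ spectrum ℂ
        (((Matrix.fromBlocks (0 : Matrix (Fin d) (Fin d) ℝ) (-1) M (γ • 1)).map
            Complex.ofReal : Matrix (Fin d ⊕ Fin d) (Fin d ⊕ Fin d) ℂ)),
      0 < z.re)
    ↔ (∀ z ∈ spectrum ℂ ((M.map Complex.ofReal : Matrix (Fin d) (Fin d) ℂ)),
        0 < z.re ∧ z.im ^ 2 < γ ^ 2 * z.re) :=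
  stmt1_general d γ hγ M
end

section
/- Let M be a d×d real matrix, γ > 0, and let w = u + i v ∈ ℂ^d (u, v ∈ ℝ^d, |u|² + |v|² = 1) be a unit eigenvector of M with eigenvalue z = a + i b (a, b ∈ ℝ). Then ⟨K_M w, w⟩_ℂ = ⟨K_M u, u⟩ + ⟨K_M v, v⟩ = γ² a − b², where ⟨·,·⟩_ℂ is the Hermitian inner product on ℂ^d. -/
/-!
`K_M` is the symmetric part of `γ² M + ½ (M² − Mᵀ M)`, so its quadratic form is
`x ↦ γ² ⟪x, M x⟫ + ½ ⟪x, M² x⟫ − ½ ‖M x‖²`. On the real and imaginary parts of an eigenvector,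
`M u = a u − b v` and `M v = b u + a v`, so the three terms summed over `u` and `v` give
`γ² a`, `½ (a² − b²)` and `−½ (a² + b²)` (times `‖u‖² + ‖v‖² = 1`). Since `K_M` is symmetric,
the Hermitian form `⟪K_M w, w⟫` has no imaginary part.
-/

open Matrix

open Complex

namespace Matrix

variable {n : Type*}

noncomputable def symmPart (A : Matrix n n ℝ) : Matrix n n ℝ := (1 / 2 : ℝ) • (A + Aᵀ)

noncomputable def skewPart (A : Matrix n n ℝ) : Matrix n n ℝ := (1 / 2 : ℝ) • (A - Aᵀ)

theorem isSymm_symmPart (A : Matrix n n ℝ) : (symmPart A).IsSymm := by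
  rw [IsSymm, symmPart, transpose_smul, transpose_add, transpose_transpose, add_comm]

variable [Fintype n]

noncomputable def kMatrix (γ : ℝ) (M : Matrix n n ℝ) : Matrix n n ℝ :=
  γ ^ 2 • symmPart M + skewPart M * skewPart M +
    (1 / 2 : ℝ) • (skewPart M * symmPart M - symmPart M * skewPart M)

theorem dotProduct_transpose_mulVec_self (A : Matrix n n ℝ) (x : n → ℝ) :
    x ⬝ᵥ Aᵀ *ᵥ x = x ⬝ᵥ A *ᵥ x := by
  rw [mulVec_transpose, dotProduct_comm, ← dotProduct_mulVec]

theorem dotProduct_symmPart_mulVec_self (A : Matrix n n ℝ) (x : n → ℝ) :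
    x ⬝ᵥ symmPart A *ᵥ x = x ⬝ᵥ A *ᵥ x := by
  rw [symmPart, smul_mulVec, add_mulVec, dotProduct_smul, dotProduct_add,
    dotProduct_transpose_mulVec_self, smul_eq_mul]
  ring

theorem IsSymm.dotProduct_mulVec_comm {A : Matrix n n ℝ} (hA : A.IsSymm) (x y : n → ℝ) :
    x ⬝ᵥ A *ᵥ y = y ⬝ᵥ A *ᵥ x := by
  rw [dotProduct_mulVec, ← mulVec_transpose, hA.eq, dotProduct_comm]

theorem kMatrix_eq_symmPart (γ : ℝ) (M : Matrix n n ℝ) :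
    kMatrix γ M = symmPart (γ ^ 2 • M + (1 / 2 : ℝ) • (M * M - Mᵀ * M)) := by
  simp only [kMatrix, symmPart, skewPart, transpose_add, transpose_smul, transpose_sub,
    transpose_mul, transpose_transpose, smul_add, smul_sub, add_mul, mul_add, sub_mul, mul_sub,
    smul_mul_assoc, mul_smul_comm, smul_smul]
  module

theorem isSymm_kMatrix (γ : ℝ) (M : Matrix n n ℝ) : (kMatrix γ M).IsSymm :=
  kMatrix_eq_symmPart γ M ▸ isSymm_symmPart _

theorem dotProduct_kMatrix_mulVec_self (γ : ℝ) (M : Matrix n n ℝ) (x : n → ℝ) :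
    x ⬝ᵥ kMatrix γ M *ᵥ x =
      γ ^ 2 * (x ⬝ᵥ M *ᵥ x) + (x ⬝ᵥ M *ᵥ M *ᵥ x - M *ᵥ x ⬝ᵥ M *ᵥ x) / 2 := by
  rw [kMatrix_eq_symmPart, dotProduct_symmPart_mulVec_self, add_mulVec, smul_mulVec, smul_mulVec,
    sub_mulVec, ← mulVec_mulVec, ← mulVec_mulVec, mulVec_transpose, dotProduct_add,
    dotProduct_smul, dotProduct_smul, dotProduct_sub, dotProduct_comm x (_ ᵥ* M),
    ← dotProduct_mulVec, smul_eq_mul, smul_eq_mul]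
  ring

theorem dotProduct_kMatrix_mulVec_add_of_mulVec_eq {γ a b : ℝ} {M : Matrix n n ℝ} {u v : n → ℝ}
    (hu : M *ᵥ u = a • u - b • v) (hv : M *ᵥ v = b • u + a • v) :
    u ⬝ᵥ kMatrix γ M *ᵥ u + v ⬝ᵥ kMatrix γ M *ᵥ v =
      (γ ^ 2 * a - b ^ 2) * (u ⬝ᵥ u + v ⬝ᵥ v) := by
  simp only [dotProduct_kMatrix_mulVec_self, hu, hv, mulVec_sub, mulVec_add, mulVec_smul,
    dotProduct_sub, dotProduct_add, dotProduct_smul, sub_dotProduct, add_dotProduct,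
    smul_dotProduct, smul_eq_mul, dotProduct_comm v u]
  ring

theorem map_ofReal_mulVec_add_mul_I (A : Matrix n n ℝ) (u v : n → ℝ) :
    A.map ofReal *ᵥ (fun i => (u i : ℂ) + v i * I) =
      fun i => ((A *ᵥ u) i : ℂ) + (A *ᵥ v) i * I := by
  ext i
  simp only [mulVec, dotProduct, map_apply, ofReal_sum, ofReal_mul, Finset.sum_mul,
    ← Finset.sum_add_distrib]
  exact Finset.sum_congr rfl fun j _ => by ring

theorem star_add_mul_I_dotProduct (u v u' v' : n → ℝ) :
    star (fun i => (u i : ℂ) + v i * I) ⬝ᵥ (fun i => (u' i : ℂ) + v' i * I) =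
      ((u ⬝ᵥ u' + v ⬝ᵥ v' : ℝ) : ℂ) + ((u ⬝ᵥ v' - v ⬝ᵥ u' : ℝ) : ℂ) * I := by
  simp only [dotProduct, Pi.star_apply, star_add, star_mul', star_def, conj_ofReal, conj_I]
  push_cast
  simp only [Finset.sum_mul, ← Finset.sum_add_distrib, ← Finset.sum_sub_distrib]
  exact Finset.sum_congr rfl fun j _ => by linear_combination (-(v j : ℂ) * v' j) * I_mul_I

theorem mulVec_eq_of_map_ofReal_mulVec_eq_smul {M : Matrix n n ℝ} {a b : ℝ} {u v : n → ℝ}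
    (h : M.map ofReal *ᵥ (fun i => (u i : ℂ) + v i * I) =
      ((a : ℂ) + b * I) • fun i => (u i : ℂ) + v i * I) :
    M *ᵥ u = a • u - b • v ∧ M *ᵥ v = b • u + a • v := by
  rw [map_ofReal_mulVec_add_mul_I] at h
  constructor <;> ext i <;> have hi := congr_fun h i
  · simpa using congr_arg re hi
  · simpa [add_comm] using congr_arg im hi

end Matrix

theorem stmt2_general (d : ℕ) (γ : ℝ)
    (M Ms Ma K : Matrix (Fin d) (Fin d) ℝ)
    (hMs : Ms = (1 / 2 : ℝ) • (M + Mᵀ))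
    (hMa : Ma = (1 / 2 : ℝ) • (M - Mᵀ))
    (hK : K = γ ^ 2 • Ms + Ma * Ma + (1 / 2 : ℝ) • (Ma * Ms - Ms * Ma))
    (a b : ℝ) (u v : Fin d → ℝ)
    (hunit : (∑ i, u i ^ 2) + (∑ i, v i ^ 2) = 1)
    (w : Fin d → ℂ) (hw : w = fun i => (u i : ℂ) + (v i : ℂ) * Complex.I)
    (heig : (M.map Complex.ofReal).mulVec w = ((a : ℂ) + (b : ℂ) * Complex.I) • w) :
    star w ⬝ᵥ (K.map Complex.ofReal).mulVec w = ((γ ^ 2 * a - b ^ 2 : ℝ) : ℂ) ∧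
      K.mulVec u ⬝ᵥ u + K.mulVec v ⬝ᵥ v = γ ^ 2 * a - b ^ 2 := by
  subst hw
  obtain rfl : K = kMatrix γ M := by rw [hK, hMs, hMa]; rfl
  obtain ⟨hu, hv⟩ := mulVec_eq_of_map_ofReal_mulVec_eq_smul heig
  have hnorm : u ⬝ᵥ u + v ⬝ᵥ v = 1 := by simpa [dotProduct, sq] using hunit
  have hquad : u ⬝ᵥ kMatrix γ M *ᵥ u + v ⬝ᵥ kMatrix γ M *ᵥ v = γ ^ 2 * a - b ^ 2 := by
    rw [dotProduct_kMatrix_mulVec_add_of_mulVec_eq hu hv, hnorm, mul_one]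
  refine ⟨?_, by rwa [dotProduct_comm, dotProduct_comm (_ *ᵥ v)]⟩
  rw [map_ofReal_mulVec_add_mul_I, star_add_mul_I_dotProduct, hquad,
    (isSymm_kMatrix γ M).dotProduct_mulVec_comm u v, sub_self, ofReal_zero, zero_mul, add_zero]

/-- Lemma 3.2-(1). If `w = u + iv` is a unit eigenvector of `M` with
eigenvalue `z = a + ib`, then `⟨K_M w, w⟩_ℂ = ⟨K_M u, u⟩ + ⟨K_M v, v⟩ = γ² a − b²`,
where `K_M = γ² Mˢ + (Mᵃ)² + ½(Mᵃ Mˢ − Mˢ Mᵃ)`. -/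
theorem stmt2 (d : ℕ) (hd : 1 ≤ d) (γ : ℝ) (hγ : 0 < γ)
    (M Ms Ma K : Matrix (Fin d) (Fin d) ℝ)
    (hMs : Ms = (1 / 2 : ℝ) • (M + Mᵀ))
    (hMa : Ma = (1 / 2 : ℝ) • (M - Mᵀ))
    (hK : K = γ ^ 2 • Ms + Ma * Ma + (1 / 2 : ℝ) • (Ma * Ms - Ms * Ma))
    (a b : ℝ) (u v : Fin d → ℝ)
    (hunit : (∑ i, u i ^ 2) + (∑ i, v i ^ 2) = 1)
    (w : Fin d → ℂ) (hw : w = fun i => (u i : ℂ) + (v i : ℂ) * Complex.I)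
    (heig : (M.map Complex.ofReal).mulVec w = ((a : ℂ) + (b : ℂ) * Complex.I) • w) :
    star w ⬝ᵥ (K.map Complex.ofReal).mulVec w = ((γ ^ 2 * a - b ^ 2 : ℝ) : ℂ) ∧
      K.mulVec u ⬝ᵥ u + K.mulVec v ⬝ᵥ v = γ ^ 2 * a - b ^ 2 :=
  stmt2_general d γ M Ms Ma K hMs hMa hK a b u v hunit w hw heig
end

section
/- Let M be a d×d real matrix and let w = u + i v ∈ ℂ^d (u, v ∈ ℝ^d, |u|² + |v|² = 1) be a unit eigenvector of M with eigenvalue z = a + i b (a, b ∈ ℝ). Then ⟨(M^a M^s − M^s M^a) u, u⟩ + ⟨(M^a M^s − M^s M^a) v, v⟩ ≥ 0. -/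
/-!
For `Mˢ = (M + Mᵀ)/2` and `Mᵃ = (M - Mᵀ)/2` one has `Mᵃ Mˢ - Mˢ Mᵃ = (M Mᵀ - Mᵀ M)/2`, so the
quantity in question is `(‖Mᵀu‖² + ‖Mᵀv‖² - ‖Mu‖² - ‖Mv‖²)/2`. Since `M` acts on `u, v` as the
rotation-dilation by `z`, `‖Mu‖² + ‖Mv‖² = |z|²(‖u‖² + ‖v‖²)`. On the other side `M` maps
`au + bv` and `av - bu` to `|z|²u` and `|z|²v`, so expanding
`‖Mᵀu - (au + bv)‖² + ‖Mᵀv - (av - bu)‖² ≥ 0` gives `‖Mᵀu‖² + ‖Mᵀv‖² ≥ |z|²(‖u‖² + ‖v‖²)`.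
-/

open Matrix

variable {n R : Type*} [Fintype n]

theorem commutator_half_skew_half_symm [Field R] (M : Matrix n n R) :
    (1 / 2 : R) • (M - Mᵀ) * ((1 / 2 : R) • (M + Mᵀ))
        - (1 / 2 : R) • (M + Mᵀ) * ((1 / 2 : R) • (M - Mᵀ))
      = (1 / 2 : R) • (M * Mᵀ - Mᵀ * M) := by
  have h : (M - Mᵀ) * (M + Mᵀ) - (M + Mᵀ) * (M - Mᵀ) = (2 : R) • (M * Mᵀ - Mᵀ * M) := by
    simp only [sub_mul, mul_sub, add_mul, mul_add, two_smul]
    abel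
  rw [smul_mul_smul_comm, smul_mul_smul_comm, ← smul_sub, h, smul_smul]
  rcases eq_or_ne (2 : R) 0 with h2 | h2
  · simp [h2]
  · field_simp

theorem dotProduct_mulVec_self_mul_transpose_sub [CommRing R] (M : Matrix n n R) (x : n → R) :
    (M * Mᵀ - Mᵀ * M) *ᵥ x ⬝ᵥ x = Mᵀ *ᵥ x ⬝ᵥ Mᵀ *ᵥ x - M *ᵥ x ⬝ᵥ M *ᵥ x := by
  rw [sub_mulVec, sub_dotProduct, ← mulVec_mulVec, ← mulVec_mulVec, dotProduct_comm,
    dotProduct_comm (Mᵀ *ᵥ _), dotProduct_transpose_mulVec, ← dotProduct_transpose_mulVec Mᵀ,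
    transpose_transpose]

theorem two_mul_dotProduct_mulVec_sub_le [CommRing R] [LinearOrder R] [IsStrictOrderedRing R]
    (M : Matrix n n R) (x y : n → R) :
    2 * (x ⬝ᵥ M *ᵥ y) - y ⬝ᵥ y ≤ Mᵀ *ᵥ x ⬝ᵥ Mᵀ *ᵥ x := by
  have h : 0 ≤ (Mᵀ *ᵥ x - y) ⬝ᵥ (Mᵀ *ᵥ x - y) :=
    Fintype.sum_nonneg fun _ => mul_self_nonneg _
  have hxy : Mᵀ *ᵥ x ⬝ᵥ y = x ⬝ᵥ M *ᵥ y := by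
    rw [dotProduct_mulVec, mulVec_transpose]
  simp only [sub_dotProduct, dotProduct_sub, dotProduct_comm y, hxy] at h
  linarith

theorem rotation_dotProduct_self [CommRing R] (a b : R) (x y : n → R) :
    (a • x - b • y) ⬝ᵥ (a • x - b • y) + (b • x + a • y) ⬝ᵥ (b • x + a • y)
      = (a ^ 2 + b ^ 2) * (x ⬝ᵥ x + y ⬝ᵥ y) := by
  simp only [sub_dotProduct, dotProduct_sub, add_dotProduct, dotProduct_add, smul_dotProduct,
    dotProduct_smul, smul_eq_mul, dotProduct_comm y x]
  ring

theorem le_dotProduct_transpose_mulVec_add [CommRing R] [LinearOrder R] [IsStrictOrderedRing R]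
    {M : Matrix n n R} {a b : R} {u v : n → R}
    (hu : M *ᵥ u = a • u - b • v) (hv : M *ᵥ v = b • u + a • v) :
    (a ^ 2 + b ^ 2) * (u ⬝ᵥ u + v ⬝ᵥ v) ≤ Mᵀ *ᵥ u ⬝ᵥ Mᵀ *ᵥ u + Mᵀ *ᵥ v ⬝ᵥ Mᵀ *ᵥ v := by
  have hu' : M *ᵥ (a • u - (-b) • v) = (a ^ 2 + b ^ 2) • u := by
    rw [mulVec_sub, mulVec_smul, mulVec_smul, hu, hv]
    module
  have hv' : M *ᵥ ((-b) • u + a • v) = (a ^ 2 + b ^ 2) • v := by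
    rw [mulVec_add, mulVec_smul, mulVec_smul, hu, hv]
    module
  have h₁ := two_mul_dotProduct_mulVec_sub_le M u (a • u - (-b) • v)
  have h₂ := two_mul_dotProduct_mulVec_sub_le M v ((-b) • u + a • v)
  have hnorm := rotation_dotProduct_self a (-b) u v
  rw [hu', dotProduct_smul, smul_eq_mul] at h₁
  rw [hv', dotProduct_smul, smul_eq_mul] at h₂
  rw [neg_sq] at hnorm
  linarith

theorem mulVec_eq_rotation_of_mulVec_eq_smul (M : Matrix n n ℝ) (u v : n → ℝ) (a b : ℝ)
    (h : M.map Complex.ofReal *ᵥ (fun i => (u i : ℂ) + (v i : ℂ) * Complex.I)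
      = ((a : ℂ) + (b : ℂ) * Complex.I) • fun i => (u i : ℂ) + (v i : ℂ) * Complex.I) :
    M *ᵥ u = a • u - b • v ∧ M *ᵥ v = b • u + a • v := by
  have hmap (x : n → ℝ) (i : n) : (M.map Complex.ofReal *ᵥ fun j => (x j : ℂ)) i = (M *ᵥ x) i :=
    (RingHom.map_mulVec Complex.ofRealHom M x i).symm
  have hsplit : (fun i => (u i : ℂ) + (v i : ℂ) * Complex.I)
      = (fun i => (u i : ℂ)) + Complex.I • fun i => (v i : ℂ) := by
    ext i
    simp [mul_comm]
  rw [hsplit, mulVec_add, mulVec_smul] at h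
  have hre i := congrArg Complex.re (congrFun h i)
  have him i := congrArg Complex.im (congrFun h i)
  simp only [Pi.add_apply, hmap, Pi.smul_apply, smul_eq_mul, Complex.add_re, Complex.ofReal_re,
    Complex.mul_re, Complex.I_re, zero_mul, Complex.I_im, Complex.ofReal_im, mul_zero, sub_self,
    add_zero, mul_one, Complex.add_im, Complex.mul_im, zero_add, one_mul] at hre him
  constructor <;> funext i
  · simp only [Pi.sub_apply, Pi.smul_apply, smul_eq_mul]
    linarith [hre i]
  · simp only [Pi.add_apply, Pi.smul_apply, smul_eq_mul]
    linarith [him i]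

theorem stmt3_general (d : ℕ)
    (M Ms Ma : Matrix (Fin d) (Fin d) ℝ)
    (hMs : Ms = (1 / 2 : ℝ) • (M + Mᵀ))
    (hMa : Ma = (1 / 2 : ℝ) • (M - Mᵀ))
    (a b : ℝ) (u v : Fin d → ℝ)
    (w : Fin d → ℂ) (hw : w = fun i => (u i : ℂ) + (v i : ℂ) * Complex.I)
    (heig : (M.map Complex.ofReal).mulVec w = ((a : ℂ) + (b : ℂ) * Complex.I) • w) :
    0 ≤ (Ma * Ms - Ms * Ma).mulVec u ⬝ᵥ u + (Ma * Ms - Ms * Ma).mulVec v ⬝ᵥ v := by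
  subst hMs hMa hw
  obtain ⟨hu, hv⟩ := mulVec_eq_rotation_of_mulVec_eq_smul M u v a b heig
  have hlower := le_dotProduct_transpose_mulVec_add hu hv
  have hrot : M *ᵥ u ⬝ᵥ M *ᵥ u + M *ᵥ v ⬝ᵥ M *ᵥ v = (a ^ 2 + b ^ 2) * (u ⬝ᵥ u + v ⬝ᵥ v) := by
    rw [hu, hv]
    exact rotation_dotProduct_self a b u v
  simp only [commutator_half_skew_half_symm, smul_mulVec, smul_dotProduct, smul_eq_mul,
    dotProduct_mulVec_self_mul_transpose_sub]
  linarith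

/-- Lemma 3.2-(2). If `w = u + iv` is a unit eigenvector of `M` with
eigenvalue `z = a + ib`, then
`⟨(Mᵃ Mˢ − Mˢ Mᵃ) u, u⟩ + ⟨(Mᵃ Mˢ − Mˢ Mᵃ) v, v⟩ ≥ 0`. -/
theorem stmt3 (d : ℕ) (hd : 1 ≤ d)
    (M Ms Ma : Matrix (Fin d) (Fin d) ℝ)
    (hMs : Ms = (1 / 2 : ℝ) • (M + Mᵀ))
    (hMa : Ma = (1 / 2 : ℝ) • (M - Mᵀ))
    (a b : ℝ) (u v : Fin d → ℝ)
    (hunit : (∑ i, u i ^ 2) + (∑ i, v i ^ 2) = 1)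
    (w : Fin d → ℂ) (hw : w = fun i => (u i : ℂ) + (v i : ℂ) * Complex.I)
    (heig : (M.map Complex.ofReal).mulVec w = ((a : ℂ) + (b : ℂ) * Complex.I) • w) :
    0 ≤ (Ma * Ms - Ms * Ma).mulVec u ⬝ᵥ u + (Ma * Ms - Ms * Ma).mulVec v ⬝ᵥ v :=
  stmt3_general d M Ms Ma hMs hMa a b u v w hw heig
end

section
/- Let M be a d×d real matrix and γ > 0. The following are equivalent: (i) for every x ∈ ℝ^{2d}, exp(−t T_M) x → 0 as t → ∞ (i.e., the linear underdamped flow dX_t/dt = −T_M X_t is asymptotically stable); (ii) every complex eigenvalue a + ib of M satisfies a > 0 and γ² a > b². Moreover, if the matrix K_M is positive definite, then (i) holds. -/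
open Matrix Filter Polynomial NormedSpace

namespace Stmt4Aux

attribute [local instance] Matrix.linftyOpNormedAddCommGroup Matrix.linftyOpNormedRing
  Matrix.linftyOpNormedAlgebra

variable {n : Type*} [Fintype n] [DecidableEq n]

lemma mem_spectrum_iff (A : Matrix n n ℂ) (μ : ℂ) :
    μ ∈ spectrum ℂ A ↔ ∃ v : n → ℂ, v ≠ 0 ∧ A *ᵥ v = μ • v := by
  rw [spectrum.mem_iff, Matrix.isUnit_iff_isUnit_det, isUnit_iff_ne_zero, not_ne_iff,
    ← Matrix.exists_mulVec_eq_zero_iff]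
  refine exists_congr fun v => and_congr_right fun hv => ?_
  rw [Matrix.sub_mulVec, Algebra.algebraMap_eq_smul_one, Matrix.smul_mulVec,
    Matrix.one_mulVec, sub_eq_zero, eq_comm]

lemma pow_mulVec_eigen (A : Matrix n n ℂ) (v : n → ℂ) (μ : ℂ) (h : A *ᵥ v = μ • v) (k : ℕ) :
    (A ^ k) *ᵥ v = μ ^ k • v := by
  induction k with
  | zero => simp
  | succ k ih =>
      rw [pow_succ, ← Matrix.mulVec_mulVec, h, Matrix.mulVec_smul, ih, smul_smul, pow_succ,
        mul_comm]

lemma exp_mulVec_eigen (A : Matrix n n ℂ) (v : n → ℂ) (μ : ℂ) (h : A *ᵥ v = μ • v) :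
    (exp A) *ᵥ v = Complex.exp μ • v := by
  classical
  have hs : HasSum (fun k : ℕ => (k.factorial⁻¹ : ℂ) • A ^ k) (exp A) := by
    exact NormedSpace.exp_series_hasSum_exp' (𝕂 := ℂ) A
  let L : Matrix n n ℂ →ₗ[ℂ] (n → ℂ) :=
    { toFun := fun B => B *ᵥ v
      map_add' := fun B C => Matrix.add_mulVec B C v
      map_smul' := fun c B => Matrix.smul_mulVec c B v }
  have hL : Continuous L := L.continuous_of_finiteDimensional
  have hs2 := (L.toContinuousLinearMap.hasSum hs)
  have he : ∀ k : ℕ, L.toContinuousLinearMap ((k.factorial⁻¹ : ℂ) • A ^ k)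
      = ((k.factorial⁻¹ : ℂ) * μ ^ k) • v := by
    intro k
    show ((k.factorial⁻¹ : ℂ) • A ^ k) *ᵥ v = _
    rw [Matrix.smul_mulVec, pow_mulVec_eigen A v μ h k, smul_smul]
  rw [funext he] at hs2
  have hc : HasSum (fun k : ℕ => (k.factorial⁻¹ : ℂ) * μ ^ k) (Complex.exp μ) := by
    have h0 := NormedSpace.expSeries_hasSum_exp (𝕂 := ℂ) μ
    simp only [NormedSpace.expSeries_apply_eq, smul_eq_mul] at h0
    rwa [Complex.exp_eq_exp_ℂ]
  have hc2 := hc.smul_const v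
  exact hs2.unique hc2

lemma aeval_mulVec_eigen (A : Matrix n n ℂ) (v : n → ℂ) (μ : ℂ) (h : A *ᵥ v = μ • v)
    (p : ℂ[X]) : (aeval A p) *ᵥ v = p.eval μ • v := by
  induction p using Polynomial.induction_on' with
  | add p q hp hq => rw [map_add, Matrix.add_mulVec, hp, hq, eval_add, add_smul]
  | monomial k c =>
      rw [aeval_monomial, eval_monomial, Algebra.algebraMap_eq_smul_one, smul_mul_assoc,
        one_mul, Matrix.smul_mulVec, pow_mulVec_eigen A v μ h k, smul_smul]

lemma exists_aeval_eq_exp (A : Matrix n n ℂ) : ∃ p : ℂ[X], aeval A p = exp A := by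
  classical
  have hmem : exp A ∈ Algebra.adjoin ℂ ({A} : Set (Matrix n n ℂ)) := by
    have hs : HasSum (fun k : ℕ => (k.factorial⁻¹ : ℂ) • A ^ k) (exp A) := by
      exact NormedSpace.exp_series_hasSum_exp' (𝕂 := ℂ) A
    have htend := hs.tendsto_sum_nat
    have hclosed : IsClosed ((Subalgebra.toSubmodule
        (Algebra.adjoin ℂ ({A} : Set (Matrix n n ℂ)))) : Set (Matrix n n ℂ)) :=
      Submodule.closed_of_finiteDimensional _
    refine hclosed.mem_of_tendsto htend (Filter.Eventually.of_forall fun N => ?_)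
    refine Submodule.sum_mem _ fun k _ => Submodule.smul_mem _ _ ?_
    exact Subalgebra.pow_mem _ (Algebra.self_mem_adjoin_singleton ℂ A) k
  rw [Algebra.adjoin_singleton_eq_range_aeval] at hmem
  obtain ⟨p, hp⟩ := hmem
  exact ⟨p, hp⟩


lemma spectrum_exp [Nonempty n] (A : Matrix n n ℂ) :
    spectrum ℂ (exp A) = Complex.exp '' spectrum ℂ A := by
  obtain ⟨p, hp⟩ := exists_aeval_eq_exp A
  have hne : (spectrum ℂ A).Nonempty := spectrum.nonempty A
  rw [← hp, spectrum.map_polynomial_aeval_of_nonempty A p hne]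
  refine Set.image_congr fun μ hμ => ?_
  obtain ⟨v, hv, hAv⟩ := (mem_spectrum_iff A μ).mp hμ
  have h1 := aeval_mulVec_eigen A v μ hAv p
  rw [hp, exp_mulVec_eigen A v μ hAv] at h1
  obtain ⟨j, hj⟩ := Function.ne_iff.mp hv
  have := congrFun h1 j
  simp only [Pi.smul_apply, smul_eq_mul] at this
  exact mul_right_cancel₀ hj this.symm

lemma norm_pow_tendsto_zero [Nonempty n] (G : Matrix n n ℂ)
    (h : ∀ μ ∈ spectrum ℂ G, ‖μ‖₊ < 1) :
    Tendsto (fun k : ℕ => ‖G ^ k‖) atTop (nhds 0) := by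
  have hsr : spectralRadius ℂ G < 1 := by
    simpa using spectrum.spectralRadius_lt_of_forall_lt_of_nonempty (spectrum.nonempty G)
      (r := 1) h
  obtain ⟨r, hr1, hr2⟩ := ENNReal.lt_iff_exists_nnreal_btwn.mp hsr
  have hgel := spectrum.pow_nnnorm_pow_one_div_tendsto_nhds_spectralRadius G
  have hev : ∀ᶠ k : ℕ in atTop, (‖G ^ k‖₊ : ENNReal) ^ (1 / (k : ℝ)) < (r : ENNReal) :=
    hgel.eventually_lt_const hr1
  have hev2 : ∀ᶠ k : ℕ in atTop, ‖G ^ k‖ ≤ (r : ℝ) ^ k := by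
    filter_upwards [hev, eventually_ge_atTop 1] with k hk hk1
    have hk0 : (k : ℝ) ≠ 0 := by positivity
    have h2 : ((‖G ^ k‖₊ : ENNReal) ^ (1 / (k : ℝ))) ^ (k : ℝ) ≤ (r : ENNReal) ^ (k : ℝ) :=
      ENNReal.rpow_le_rpow hk.le (by positivity)
    rw [← ENNReal.rpow_mul, one_div, inv_mul_cancel₀ hk0, ENNReal.rpow_one] at h2
    rw [ENNReal.rpow_natCast, ← ENNReal.coe_pow, ENNReal.coe_le_coe] at h2
    calc ‖G ^ k‖ = ((‖G ^ k‖₊ : ℝ)) := rfl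
    _ ≤ ((r ^ k : NNReal) : ℝ) := by exact_mod_cast h2
    _ = (r : ℝ) ^ k := by push_cast; ring
  have hpow : Tendsto (fun k : ℕ => (r : ℝ) ^ k) atTop (nhds 0) :=
    tendsto_pow_atTop_nhds_zero_of_lt_one r.coe_nonneg (by exact_mod_cast hr2)
  exact squeeze_zero' (Filter.Eventually.of_forall fun k => norm_nonneg _) hev2 hpow


lemma map_ofReal_smul (t : ℝ) (B : Matrix n n ℝ) :
    (t • B).map (Complex.ofReal : ℝ → ℂ) = t • (B.map Complex.ofReal) := by
  ext i j
  simp [Complex.real_smul]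

lemma exp_map_ofReal (B : Matrix n n ℝ) :
    (exp B).map (Complex.ofReal : ℝ → ℂ) = exp (B.map Complex.ofReal) := by
  have hf : Continuous (Complex.ofRealHom.mapMatrix : Matrix n n ℝ →+* Matrix n n ℂ) :=
    continuous_id.matrix_map Complex.continuous_ofReal
  have h1 := map_exp (Complex.ofRealHom.mapMatrix : Matrix n n ℝ →+* Matrix n n ℂ) hf B
  exact h1

lemma mulVec_map_ofReal (B : Matrix n n ℝ) (x : n → ℝ) (j : n) :
    ((B.map (Complex.ofReal : ℝ → ℂ)) *ᵥ (fun i => (x i : ℂ))) j = ((B *ᵥ x) j : ℂ) := by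
  simp only [Matrix.mulVec, dotProduct, Matrix.map_apply]
  push_cast
  rfl

lemma tendsto_exp_smul_of_spectrum [Nonempty n] (B : Matrix n n ℝ)
    (hspec : ∀ lam ∈ spectrum ℂ (B.map (Complex.ofReal : ℝ → ℂ)), 0 < lam.re)
    (x : n → ℝ) :
    Tendsto (fun t : ℝ => (exp ((-t) • B)) *ᵥ x) atTop (nhds 0) := by
  classical
  set A : Matrix n n ℂ := B.map Complex.ofReal with hA
  set G : Matrix n n ℂ := exp (-A) with hG
  -- spectrum of G
  have hGspec : ∀ μ ∈ spectrum ℂ G, ‖μ‖₊ < 1 := by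
    intro μ hμ
    rw [hG, spectrum_exp] at hμ
    obtain ⟨lam, hlam, rfl⟩ := hμ
    have hneg : -lam ∈ spectrum ℂ A := by
      obtain ⟨v, hv, hAv⟩ := (mem_spectrum_iff (-A) lam).mp hlam
      refine (mem_spectrum_iff A (-lam)).mpr ⟨v, hv, ?_⟩
      have := congrArg Neg.neg hAv
      rw [← Matrix.neg_mulVec, neg_neg] at this
      rw [this, neg_smul]
    have hre : lam.re < 0 := by
      have := hspec (-lam) hneg
      simp only [Complex.neg_re] at this
      linarith
    have : ‖Complex.exp lam‖ < 1 := by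
      rw [Complex.norm_exp]
      exact Real.exp_lt_one_iff.mpr hre
    exact_mod_cast this
  have hpow : Tendsto (fun k : ℕ => ‖G ^ k‖) atTop (nhds 0) :=
    norm_pow_tendsto_zero G hGspec
  -- bound on fractional part factor
  obtain ⟨C, hC⟩ := (isCompact_Icc (a := (0:ℝ)) (b := 1)).exists_bound_of_continuousOn
    (((NormedSpace.exp_continuous (𝔸 := Matrix n n ℂ)).comp ((continuous_id (X := ℝ)).smul continuous_const)).continuousOn)
  have hC0 : 0 ≤ C := le_trans (norm_nonneg _) (hC 0 (by norm_num))
  -- the complexified vector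
  set xc : n → ℂ := fun i => (x i : ℂ) with hxc
  -- key norm bound
  have hbound : ∀ t : ℝ, 0 ≤ t →
      ‖(exp ((-t) • A)) *ᵥ xc‖ ≤ ‖G ^ (⌊t⌋₊)‖ * (C * ‖xc‖) := by
    intro t ht
    have hsplit : (-t) • A = ((⌊t⌋₊ : ℝ)) • (-A) + (t - ⌊t⌋₊) • (-A) := by
      rw [← add_smul]
      module
    have hcomm : Commute (((⌊t⌋₊ : ℝ)) • (-A)) ((t - ⌊t⌋₊) • (-A)) :=
      ((Commute.refl (-A)).smul_left _).smul_right _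
    have hmul : exp ((-t) • A) = G ^ (⌊t⌋₊) * exp ((t - ⌊t⌋₊) • (-A)) := by
      rw [hsplit, Matrix.exp_add_of_commute _ _ hcomm]
      congr 1
      rw [← Matrix.exp_nsmul, Nat.cast_smul_eq_nsmul]
    have hfrac : ‖exp ((t - ⌊t⌋₊) • (-A))‖ ≤ C := by
      refine hC _ ⟨sub_nonneg.mpr (Nat.floor_le ht), ?_⟩
      have := Nat.lt_floor_add_one t
      linarith
    calc ‖(exp ((-t) • A)) *ᵥ xc‖ ≤ ‖exp ((-t) • A)‖ * ‖xc‖ :=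
          Matrix.linfty_opNorm_mulVec _ _
    _ ≤ (‖G ^ (⌊t⌋₊)‖ * ‖exp ((t - ⌊t⌋₊) • (-A))‖) * ‖xc‖ := by
        rw [hmul]; exact mul_le_mul_of_nonneg_right (norm_mul_le _ _) (norm_nonneg _)
    _ ≤ (‖G ^ (⌊t⌋₊)‖ * C) * ‖xc‖ := by
        refine mul_le_mul_of_nonneg_right ?_ (norm_nonneg _)
        exact mul_le_mul_of_nonneg_left hfrac (norm_nonneg _)
    _ = ‖G ^ (⌊t⌋₊)‖ * (C * ‖xc‖) := by ring
  -- floor composite tendsto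
  have hfloor : Tendsto (fun t : ℝ => ‖G ^ (⌊t⌋₊)‖ * (C * ‖xc‖)) atTop (nhds 0) := by
    have h1 : Tendsto (fun t : ℝ => ‖G ^ (⌊t⌋₊)‖) atTop (nhds 0) :=
      hpow.comp (tendsto_nat_floor_atTop)
    simpa using h1.mul_const (C * ‖xc‖)
  have hcplx : Tendsto (fun t : ℝ => (exp ((-t) • A)) *ᵥ xc) atTop (nhds 0) := by
    rw [tendsto_zero_iff_norm_tendsto_zero]
    refine squeeze_zero' (Filter.Eventually.of_forall fun t => norm_nonneg _) ?_ hfloor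
    filter_upwards [eventually_ge_atTop (0:ℝ)] with t ht
    exact hbound t ht
  -- transfer to the real statement
  rw [tendsto_pi_nhds]
  intro j
  have hjc : Tendsto (fun t : ℝ => ((exp ((-t) • A)) *ᵥ xc) j) atTop (nhds 0) := by
    have := (continuous_apply j).tendsto (0 : n → ℂ)
    simpa [Function.comp_def] using this.comp hcplx
  have hkey : ∀ t : ℝ, ((exp ((-t) • B)) *ᵥ x) j = (((exp ((-t) • A)) *ᵥ xc) j).re := by
    intro t
    have h1 : (exp ((-t) • B)).map (Complex.ofReal : ℝ → ℂ) = exp ((-t) • A) := by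
      rw [exp_map_ofReal, map_ofReal_smul]
    rw [← h1, mulVec_map_ofReal, Complex.ofReal_re]
  have := (Complex.continuous_re.tendsto 0).comp hjc
  simp only [Complex.zero_re] at this
  refine Tendsto.congr (fun t => (hkey t).symm) ?_
  simpa [Function.comp_def] using this


lemma spectrum_re_pos_of_tendsto (B : Matrix n n ℝ)
    (h : ∀ x : n → ℝ, Tendsto (fun t : ℝ => (exp ((-t) • B)) *ᵥ x) atTop (nhds 0)) :
    ∀ lam ∈ spectrum ℂ (B.map (Complex.ofReal : ℝ → ℂ)), 0 < lam.re := by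
  classical
  intro lam hlam
  by_contra hre
  push_neg at hre
  set A : Matrix n n ℂ := B.map Complex.ofReal with hA
  obtain ⟨v, hv, hAv⟩ := (mem_spectrum_iff A lam).mp hlam
  obtain ⟨j, hj⟩ := Function.ne_iff.mp hv
  set p : n → ℝ := fun i => (v i).re with hp
  set q : n → ℝ := fun i => (v i).im with hq
  set g : ℝ → ℂ := fun t => ((exp ((-t) • A)) *ᵥ v) j with hg
  have hgval : ∀ t : ℝ, g t = Complex.exp (((-t : ℝ) : ℂ) * lam) * v j := by
    intro t
    have h1 : ((-t) • A) *ᵥ v = (((-t : ℝ) : ℂ) * lam) • v := by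
      rw [Matrix.smul_mulVec, hAv]
      ext i
      simp [Complex.real_smul]
      ring
    have h2 := exp_mulVec_eigen ((-t) • A) v _ h1
    calc g t = ((exp ((-t) • A)) *ᵥ v) j := rfl
    _ = (Complex.exp (((-t : ℝ) : ℂ) * lam) • v) j := by rw [h2]
    _ = _ := by simp
  have hgdecomp : ∀ t : ℝ, g t =
      (((exp ((-t) • B)) *ᵥ p) j : ℂ) + Complex.I * (((exp ((-t) • B)) *ᵥ q) j : ℂ) := by
    intro t
    have hE : (exp ((-t) • B)).map (Complex.ofReal : ℝ → ℂ) = exp ((-t) • A) := by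
      rw [exp_map_ofReal, map_ofReal_smul]
    have hvdec : v = (fun i => (p i : ℂ)) + Complex.I • (fun i => (q i : ℂ)) := by
      funext i
      simp only [Pi.add_apply, Pi.smul_apply, smul_eq_mul, hp, hq]
      rw [mul_comm]
      exact (Complex.re_add_im (v i)).symm
    show ((exp ((-t) • A)) *ᵥ v) j = _
    rw [hvdec, Matrix.mulVec_add, Matrix.mulVec_smul, ← hE, Pi.add_apply, Pi.smul_apply,
      mulVec_map_ofReal, mulVec_map_ofReal, smul_eq_mul]
  have hgt : Tendsto g atTop (nhds 0) := by
    have h1 : Tendsto (fun t : ℝ => ((exp ((-t) • B)) *ᵥ p) j) atTop (nhds 0) := by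
      have := (continuous_apply j).tendsto (0 : n → ℝ)
      simpa [Function.comp_def] using this.comp (h p)
    have h2 : Tendsto (fun t : ℝ => ((exp ((-t) • B)) *ᵥ q) j) atTop (nhds 0) := by
      have := (continuous_apply j).tendsto (0 : n → ℝ)
      simpa [Function.comp_def] using this.comp (h q)
    have h1c : Tendsto (fun t : ℝ => (((exp ((-t) • B)) *ᵥ p) j : ℂ)) atTop (nhds 0) := by
      have := (Complex.continuous_ofReal.tendsto 0).comp h1
      simpa [Function.comp_def] using this
    have h2c : Tendsto (fun t : ℝ => (((exp ((-t) • B)) *ᵥ q) j : ℂ)) atTop (nhds 0) := by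
      have := (Complex.continuous_ofReal.tendsto 0).comp h2
      simpa [Function.comp_def] using this
    have := h1c.add ((h2c.const_mul Complex.I))
    simp only [add_zero, mul_zero] at this
    exact Tendsto.congr (fun t => (hgdecomp t).symm) this
  have hvj : 0 < ‖v j‖ := norm_pos_iff.mpr hj
  have hlow : ∀ t : ℝ, 0 ≤ t → ‖v j‖ ≤ ‖g t‖ := by
    intro t ht
    rw [hgval t, norm_mul, Complex.norm_exp]
    have hre2 : 0 ≤ ((((-t) : ℝ) : ℂ) * lam).re := by
      simp only [Complex.mul_re, Complex.ofReal_re, Complex.ofReal_im, zero_mul, sub_zero]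
      nlinarith [mul_nonneg ht (neg_nonneg.mpr hre)]
    nlinarith [Real.one_le_exp hre2]
  have hev := (tendsto_zero_iff_norm_tendsto_zero.mp hgt).eventually_lt_const hvj
  obtain ⟨t, ht1, ht2⟩ := (hev.and (eventually_ge_atTop (0 : ℝ))).exists
  exact absurd (hlow t ht2) (not_le.mpr ht1)


lemma mem_spectrum_blocks_iff (Mc : Matrix n n ℂ) (γ : ℝ) (lam : ℂ) :
    lam ∈ spectrum ℂ (Matrix.fromBlocks (0 : Matrix n n ℂ) (-1 : Matrix n n ℂ) Mc
      ((γ : ℂ) • (1 : Matrix n n ℂ))) ↔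
      ((γ : ℂ) * lam - lam ^ 2) ∈ spectrum ℂ Mc := by
  rw [mem_spectrum_iff, mem_spectrum_iff]
  constructor
  · rintro ⟨v, hv, hTv⟩
    set v₁ : n → ℂ := v ∘ Sum.inl with hv₁
    set v₂ : n → ℂ := v ∘ Sum.inr with hv₂
    rw [Matrix.fromBlocks_mulVec] at hTv
    have h1 : (0 : Matrix n n ℂ) *ᵥ v₁ + (-1 : Matrix n n ℂ) *ᵥ v₂ = lam • v₁ := by
      funext i; exact congrFun hTv (Sum.inl i)
    have h2 : Mc *ᵥ v₁ + ((γ : ℂ) • (1 : Matrix n n ℂ)) *ᵥ v₂ = lam • v₂ := by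
      funext i; exact congrFun hTv (Sum.inr i)
    rw [Matrix.zero_mulVec, zero_add, Matrix.neg_mulVec, Matrix.one_mulVec] at h1
    rw [Matrix.smul_mulVec, Matrix.one_mulVec] at h2
    -- v₂ = -(lam • v₁)
    have hv2 : v₂ = -(lam • v₁) := by rw [← h1, neg_neg]
    have hv1ne : v₁ ≠ 0 := by
      intro h0
      apply hv
      funext i
      cases i with
      | inl i => exact congrFun h0 i
      | inr i =>
          have := congrFun hv2 i
          simp only [hv₂, Function.comp_apply] at this ⊢
          rw [this, h0]
          simp
    refine ⟨v₁, hv1ne, ?_⟩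
    rw [hv2] at h2
    have : Mc *ᵥ v₁ = lam • -(lam • v₁) - (γ : ℂ) • -(lam • v₁) := by
      rw [← h2]; module
    rw [this]
    funext i
    simp only [Pi.smul_apply, Pi.sub_apply, Pi.neg_apply, smul_eq_mul]
    ring
  · rintro ⟨u, hu, hMu⟩
    refine ⟨Sum.elim u (-(lam • u)), ?_, ?_⟩
    · intro h0
      apply hu
      funext i
      exact congrFun h0 (Sum.inl i)
    · rw [Matrix.fromBlocks_mulVec]
      have e1 : (Sum.elim u (-(lam • u)) ∘ Sum.inl) = u := rfl
      have e2 : (Sum.elim u (-(lam • u)) ∘ Sum.inr) = -(lam • u) := rfl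
      rw [e1, e2, Matrix.zero_mulVec, zero_add, Matrix.neg_mulVec, Matrix.one_mulVec,
        Matrix.smul_mulVec, Matrix.one_mulVec, hMu]
      funext i
      cases i with
      | inl i => simp
      | inr i =>
          simp only [Sum.elim_inr, Pi.add_apply, Pi.smul_apply, Pi.neg_apply, smul_eq_mul]
          ring

lemma re_star_dotProduct (R : Matrix n n ℝ) (v : n → ℂ) :
    (dotProduct (star v) ((R.map (Complex.ofReal : ℝ → ℂ)) *ᵥ v)).re =
      (fun i => (v i).re) ⬝ᵥ (R *ᵥ fun i => (v i).re)
        + (fun i => (v i).im) ⬝ᵥ (R *ᵥ fun i => (v i).im) := by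
  simp only [dotProduct, Matrix.mulVec, Pi.star_apply, Matrix.map_apply]
  rw [Complex.re_sum, ← Finset.sum_add_distrib]
  refine Finset.sum_congr rfl fun i _ => ?_
  rw [Complex.mul_re]
  simp only [Complex.star_def, Complex.conj_re, Complex.conj_im, Complex.re_sum, Complex.im_sum]
  have h1 : ∀ j, ((R i j : ℂ) * v j).re = R i j * (v j).re := fun j => Complex.re_ofReal_mul _ _
  have h2 : ∀ j, ((R i j : ℂ) * v j).im = R i j * (v j).im := fun j => Complex.im_ofReal_mul _ _
  rw [Finset.sum_congr rfl fun j _ => h1 j, Finset.sum_congr rfl fun j _ => h2 j]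
  simp only [Finset.mul_sum, neg_mul]
  rw [Finset.sum_neg_distrib, sub_neg_eq_add, ← Finset.sum_add_distrib]

lemma adj_symm (S : Matrix n n ℂ) (hSH : Sᴴ = S) (v u : n → ℂ) :
    dotProduct (star v) (S *ᵥ u) = dotProduct (star (S *ᵥ v)) u := by
  rw [Matrix.dotProduct_mulVec, Matrix.star_mulVec, hSH]

lemma adj_skew (N : Matrix n n ℂ) (hNH : Nᴴ = -N) (v u : n → ℂ) :
    dotProduct (star v) (N *ᵥ u) = -dotProduct (star (N *ᵥ v)) u := by
  rw [Matrix.dotProduct_mulVec, Matrix.star_mulVec, hNH, Matrix.vecMul_neg,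
    neg_dotProduct, neg_neg]

lemma star_dotProduct_K (γ : ℝ) (M Ms Ma K : Matrix n n ℝ)
    (hMs : Ms = (1 / 2 : ℝ) • (M + Mᵀ))
    (hMa : Ma = (1 / 2 : ℝ) • (M - Mᵀ))
    (hK : K = γ ^ 2 • Ms + Ma * Ma + (1 / 2 : ℝ) • (Ma * Ms - Ms * Ma))
    (v : n → ℂ) (μ : ℂ)
    (hMv : (M.map (Complex.ofReal : ℝ → ℂ)) *ᵥ v = μ • v) :
    dotProduct (star v) ((K.map (Complex.ofReal : ℝ → ℂ)) *ᵥ v)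
      = ((γ ^ 2 * μ.re - μ.im ^ 2 : ℝ) : ℂ) * dotProduct (star v) v := by
  classical
  have hSH : (Ms.map (Complex.ofReal : ℝ → ℂ))ᴴ = Ms.map Complex.ofReal := by
    ext i j
    simp only [Matrix.conjTranspose_apply, Matrix.map_apply, Complex.star_def,
      Complex.conj_ofReal, hMs, Matrix.smul_apply, Matrix.add_apply, Matrix.transpose_apply,
      smul_eq_mul]
    push_cast
    ring
  have hNH : (Ma.map (Complex.ofReal : ℝ → ℂ))ᴴ = -(Ma.map Complex.ofReal) := by
    ext i j
    simp only [Matrix.conjTranspose_apply, Matrix.map_apply, Complex.star_def,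
      Complex.conj_ofReal, hMa, Matrix.neg_apply, Matrix.smul_apply, Matrix.sub_apply,
      Matrix.transpose_apply, smul_eq_mul]
    push_cast
    ring
  set S : Matrix n n ℂ := Ms.map Complex.ofReal with hSdef
  set N : Matrix n n ℂ := Ma.map Complex.ofReal with hNdef
  have hKC : K.map (Complex.ofReal : ℝ → ℂ)
      = ((γ : ℂ) ^ 2) • S + N * N + (1 / 2 : ℂ) • (N * S - S * N) := by
    ext i j
    simp only [hSdef, hNdef, Matrix.map_apply, hK, Matrix.add_apply, Matrix.smul_apply,
      Matrix.sub_apply, Matrix.mul_apply, smul_eq_mul]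
    push_cast
    ring
  have hsw : S *ᵥ v + N *ᵥ v = μ • v := by
    have hSN : S + N = M.map Complex.ofReal := by
      ext i j
      simp only [hSdef, hNdef, Matrix.add_apply, Matrix.map_apply, hMs, hMa, Matrix.smul_apply,
        Matrix.sub_apply, Matrix.transpose_apply, smul_eq_mul]
      push_cast
      ring
    rw [← Matrix.add_mulVec, hSN, hMv]
  -- conjugation facts
  have hstar_nv : star (dotProduct (star v) v) = dotProduct (star v) v :=
    (star_dotProduct v v).symm
  have hstarα : star (dotProduct (star v) (S *ᵥ v))
      = dotProduct (star v) (S *ᵥ v) := by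
    conv_rhs => rw [adj_symm S hSH v v]
    exact (star_dotProduct (S *ᵥ v) v).symm
  have hstarβ : star (dotProduct (star v) (N *ᵥ v))
      = -dotProduct (star v) (N *ᵥ v) := by
    conv_rhs => rw [adj_skew N hNH v v, neg_neg]
    exact (star_dotProduct (N *ᵥ v) v).symm
  have hstarW : star (dotProduct (star (N *ᵥ v)) (N *ᵥ v))
      = dotProduct (star (N *ᵥ v)) (N *ᵥ v) :=
    (star_dotProduct (N *ᵥ v) (N *ᵥ v)).symm
  have hαβ : dotProduct (star v) (S *ᵥ v) + dotProduct (star v) (N *ᵥ v)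
      = μ * dotProduct (star v) v := by
    rw [← dotProduct_add, hsw, dotProduct_smul, smul_eq_mul]
  have hαβ2 : dotProduct (star v) (S *ᵥ v) - dotProduct (star v) (N *ᵥ v)
      = (starRingEnd ℂ) μ * dotProduct (star v) v := by
    have h := congrArg star hαβ
    rw [star_add, hstarα, hstarβ, star_mul', hstar_nv] at h
    rw [sub_eq_add_neg, h, Complex.star_def]
  have hαdef : dotProduct (star v) (S *ᵥ v)
      = (μ.re : ℂ) * dotProduct (star v) v := by
    have h := Complex.add_conj μ
    push_cast at h
    linear_combination (1 / 2 : ℂ) * hαβ + (1 / 2 : ℂ) * hαβ2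
      + (dotProduct (star v) v / 2) * h
  have hβdef : dotProduct (star v) (N *ᵥ v)
      = (μ.im : ℂ) * Complex.I * dotProduct (star v) v := by
    have h := Complex.sub_conj μ
    push_cast at h
    linear_combination (1 / 2 : ℂ) * hαβ - (1 / 2 : ℂ) * hαβ2
      + (dotProduct (star v) v / 2) * h
  have hseq : S *ᵥ v = μ • v - N *ᵥ v := eq_sub_of_add_eq hsw
  have hpdef : dotProduct (star (S *ᵥ v)) (N *ᵥ v)
      = (starRingEnd ℂ) μ * dotProduct (star v) (N *ᵥ v)
        - dotProduct (star (N *ᵥ v)) (N *ᵥ v) := by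
    rw [hseq, star_sub, star_smul, sub_dotProduct, smul_dotProduct, smul_eq_mul,
      Complex.star_def]
  have hqdef : dotProduct (star (N *ᵥ v)) (S *ᵥ v)
      = -(μ * dotProduct (star v) (N *ᵥ v))
        - dotProduct (star (N *ᵥ v)) (N *ᵥ v) := by
    have h : dotProduct (star (N *ᵥ v)) (S *ᵥ v)
        = star (dotProduct (star (S *ᵥ v)) (N *ᵥ v)) :=
      star_dotProduct (N *ᵥ v) (S *ᵥ v)
    rw [h, hpdef, star_sub, star_mul', hstarW, hstarβ]
    simp only [Complex.star_def, Complex.conj_conj]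
    ring
  -- expansion
  have expand : dotProduct (star v) ((K.map (Complex.ofReal : ℝ → ℂ)) *ᵥ v)
      = (γ : ℂ) ^ 2 * dotProduct (star v) (S *ᵥ v)
        - dotProduct (star (N *ᵥ v)) (N *ᵥ v)
        + (1 / 2 : ℂ) * (-(dotProduct (star (N *ᵥ v)) (S *ᵥ v))
          - dotProduct (star (S *ᵥ v)) (N *ᵥ v)) := by
    rw [hKC, Matrix.add_mulVec, Matrix.add_mulVec, dotProduct_add, dotProduct_add,
      Matrix.smul_mulVec, dotProduct_smul, Matrix.smul_mulVec,
      dotProduct_smul, Matrix.sub_mulVec, dotProduct_sub, ← Matrix.mulVec_mulVec,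
      ← Matrix.mulVec_mulVec, ← Matrix.mulVec_mulVec, adj_skew N hNH v (N *ᵥ v),
      adj_skew N hNH v (S *ᵥ v), adj_symm S hSH v (N *ᵥ v), smul_eq_mul, smul_eq_mul]
    ring
  rw [expand, hqdef, hpdef, hβdef, hαdef]
  push_cast
  have h := Complex.sub_conj μ
  push_cast at h
  linear_combination ((μ.im : ℂ) * Complex.I * dotProduct (star v) v / 2) * h
    + ((μ.im : ℂ) ^ 2 * dotProduct (star v) v) * Complex.I_sq

lemma quad_id (γ : ℝ) (l : ℂ) :
    ((γ : ℂ) * l - l ^ 2).im ^ 2 - γ ^ 2 * (((γ : ℂ) * l - l ^ 2).re)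
      = l.re * (l.re - γ) * (γ ^ 2 + 4 * l.im ^ 2) := by
  simp only [Complex.sub_re, Complex.sub_im, Complex.mul_re, Complex.mul_im, Complex.ofReal_re,
    Complex.ofReal_im, pow_two, Complex.mul_re, Complex.mul_im]
  ring

end Stmt4Aux

open Stmt4Aux NormedSpace

/-- Theorem 3.4, asymptotic stability: linear case. For the linear
underdamped flow `dX/dt = −T_M X` with `T_M = [[0, −I],[M, γI]]`, the flow is
asymptotically stable (i.e. `exp(−t T_M) x → 0` for every `x`) iff every complex
eigenvalue `a + ib` of `M` satisfies `a > 0` and `γ² a > b²`; moreover, if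
`K_M = γ² Mˢ + (Mᵃ)² + ½(Mᵃ Mˢ − Mˢ Mᵃ)` is positive definite then the flow is
asymptotically stable. -/
theorem stmt4 (d : ℕ) (hd : 1 ≤ d) (γ : ℝ) (hγ : 0 < γ)
    (M Ms Ma K : Matrix (Fin d) (Fin d) ℝ)
    (hMs : Ms = (1 / 2 : ℝ) • (M + Mᵀ))
    (hMa : Ma = (1 / 2 : ℝ) • (M - Mᵀ))
    (hK : K = γ ^ 2 • Ms + Ma * Ma + (1 / 2 : ℝ) • (Ma * Ms - Ms * Ma))
    (T : Matrix (Fin d ⊕ Fin d) (Fin d ⊕ Fin d) ℝ)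
    (hT : T = Matrix.fromBlocks 0 (-1) M (γ • 1)) :
    ((∀ x : (Fin d ⊕ Fin d) → ℝ,
        Tendsto (fun t : ℝ => (NormedSpace.exp ((-t) • T)).mulVec x) atTop (nhds 0))
      ↔ (∀ z ∈ spectrum ℂ ((M.map Complex.ofReal : Matrix (Fin d) (Fin d) ℂ)),
          0 < z.re ∧ z.im ^ 2 < γ ^ 2 * z.re))
    ∧ (K.PosDef →
        ∀ x : (Fin d ⊕ Fin d) → ℝ,
          Tendsto (fun t : ℝ => (NormedSpace.exp ((-t) • T)).mulVec x) atTop (nhds 0)) := by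
  classical
  haveI : Nonempty (Fin d) := ⟨⟨0, hd⟩⟩
  haveI : Nonempty (Fin d ⊕ Fin d) := ⟨Sum.inl ⟨0, hd⟩⟩
  set Mc : Matrix (Fin d) (Fin d) ℂ := M.map Complex.ofReal with hMc
  have hTmap : T.map (Complex.ofReal : ℝ → ℂ)
      = Matrix.fromBlocks (0 : Matrix (Fin d) (Fin d) ℂ) (-1 : Matrix (Fin d) (Fin d) ℂ) Mc
          ((γ : ℂ) • (1 : Matrix (Fin d) (Fin d) ℂ)) := by
    rw [hT]
    ext i j
    rcases i with i | i <;> rcases j with j | j <;>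
      simp [hMc, Matrix.fromBlocks, Matrix.map_apply, Matrix.one_apply, apply_ite Complex.ofReal]
  have hiff1 : (∀ lam ∈ spectrum ℂ (T.map (Complex.ofReal : ℝ → ℂ)), 0 < lam.re)
      ↔ (∀ z ∈ spectrum ℂ Mc, 0 < z.re ∧ z.im ^ 2 < γ ^ 2 * z.re) := by
    constructor
    · intro h z hz
      obtain ⟨w, hw⟩ := IsAlgClosed.exists_pow_nat_eq ((γ : ℂ) ^ 2 - 4 * z) (n := 2) (by norm_num)
      set l : ℂ := ((γ : ℂ) + w) / 2 with hl0
      set l' : ℂ := ((γ : ℂ) - w) / 2 with hl0'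
      have hl : (γ : ℂ) * l - l ^ 2 = z := by rw [hl0]; linear_combination (-1 / 4 : ℂ) * hw
      have hl' : (γ : ℂ) * l' - l' ^ 2 = z := by rw [hl0']; linear_combination (-1 / 4 : ℂ) * hw
      have h1 : 0 < l.re := by
        refine h l ?_
        rw [hTmap, mem_spectrum_blocks_iff, hl]
        exact hz
      have h2 : 0 < l'.re := by
        refine h l' ?_
        rw [hTmap, mem_spectrum_blocks_iff, hl']
        exact hz
      have hsum : l.re + l'.re = γ := by
        have : l + l' = (γ : ℂ) := by rw [hl0, hl0']; ring
        have := congrArg Complex.re this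
        simpa [Complex.add_re] using this
      have hq := quad_id γ l
      rw [hl] at hq
      have hfact : 0 < l.re * (γ - l.re) * (γ ^ 2 + 4 * l.im ^ 2) := by
        have h4 : 0 < γ ^ 2 + 4 * l.im ^ 2 := by positivity
        exact mul_pos (mul_pos h1 (by linarith)) h4
      have him2 : z.im ^ 2 < γ ^ 2 * z.re := by nlinarith [hq, hfact]
      refine ⟨?_, him2⟩
      have h3 : 0 < γ ^ 2 * z.re := (sq_nonneg z.im).trans_lt him2
      rcases mul_pos_iff.mp h3 with ⟨_, hz2⟩ | ⟨hneg, _⟩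
      · exact hz2
      · nlinarith [sq_nonneg γ]
    · intro h lam hlam
      rw [hTmap, mem_spectrum_blocks_iff] at hlam
      obtain ⟨hre, him⟩ := h _ hlam
      have hq := quad_id γ lam
      by_contra hx
      push_neg at hx
      have hfact : 0 ≤ (-lam.re) * (γ - lam.re) * (γ ^ 2 + 4 * lam.im ^ 2) :=
        mul_nonneg (mul_nonneg (neg_nonneg.mpr hx) (by linarith)) (by positivity)
      nlinarith [hq, him, hfact]
  constructor
  · constructor
    · intro hstab z hz
      exact hiff1.mp (spectrum_re_pos_of_tendsto T hstab) z hz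
    · intro hspec x
      exact tendsto_exp_smul_of_spectrum T (hiff1.mpr hspec) x
  · intro hKpos x
    refine tendsto_exp_smul_of_spectrum T (hiff1.mpr ?_) x
    intro z hz
    obtain ⟨v, hv, hMv⟩ := (mem_spectrum_iff Mc z).mp hz
    have hc := star_dotProduct_K γ M Ms Ma K hMs hMa hK v z hMv
    set p : Fin d → ℝ := fun i => (v i).re with hp
    set q : Fin d → ℝ := fun i => (v i).im with hq
    have hcre : (dotProduct (star v) ((K.map (Complex.ofReal : ℝ → ℂ)) *ᵥ v)).re
        = (γ ^ 2 * z.re - z.im ^ 2) * (dotProduct (star v) v).re := by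
      rw [hc, Complex.re_ofReal_mul]
    have hKre := re_star_dotProduct K v
    have hone : (dotProduct (star v) v).re = p ⬝ᵥ p + q ⬝ᵥ q := by
      have h1 := re_star_dotProduct (1 : Matrix (Fin d) (Fin d) ℝ) v
      rw [Matrix.map_one Complex.ofReal Complex.ofReal_zero Complex.ofReal_one,
        Matrix.one_mulVec] at h1
      rw [h1, Matrix.one_mulVec, Matrix.one_mulVec]
    have hpq : p ≠ 0 ∨ q ≠ 0 := by
      by_contra hc0
      push_neg at hc0
      apply hv
      funext i
      have h1 := congrFun hc0.1 i
      have h2 := congrFun hc0.2 i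
      simp only [hp, hq, Pi.zero_apply] at h1 h2
      exact Complex.ext h1 h2
    have hself : ∀ u : Fin d → ℝ, 0 ≤ u ⬝ᵥ u :=
      fun u => Finset.sum_nonneg fun i _ => mul_self_nonneg _
    have hselfpos : ∀ u : Fin d → ℝ, u ≠ 0 → 0 < u ⬝ᵥ u := by
      intro u hu
      rcases (hself u).lt_or_eq with h | h
      · exact h
      · exact absurd (dotProduct_self_eq_zero.mp h.symm) hu
    have hKsd := hKpos.posSemidef
    have hcpos : 0 < (dotProduct (star v) ((K.map (Complex.ofReal : ℝ → ℂ)) *ᵥ v)).re := by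
      rw [hKre]
      rcases hpq with hp0 | hq0
      · have h1 : 0 < p ⬝ᵥ (K *ᵥ p) := by
          have := hKpos.dotProduct_mulVec_pos hp0
          simpa using this
        have h2 : 0 ≤ q ⬝ᵥ (K *ᵥ q) := by
          have := hKsd.dotProduct_mulVec_nonneg q
          simpa using this
        linarith
      · have h1 : 0 ≤ p ⬝ᵥ (K *ᵥ p) := by
          have := hKsd.dotProduct_mulVec_nonneg p
          simpa using this
        have h2 : 0 < q ⬝ᵥ (K *ᵥ q) := by
          have := hKpos.dotProduct_mulVec_pos hq0
          simpa using this
        linarith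
    have hnvpos : 0 < (dotProduct (star v) v).re := by
      rw [hone]
      rcases hpq with hp0 | hq0
      · have := hselfpos p hp0; have := hself q; linarith
      · have := hselfpos q hq0; have := hself p; linarith
    have hkey : 0 < γ ^ 2 * z.re - z.im ^ 2 := by
      rw [hcre] at hcpos
      by_contra hx
      push_neg at hx
      nlinarith
    constructor
    · nlinarith [sq_nonneg z.im]
    · linarith
end

section
/- Let M be a d×d real matrix and γ > 0. If the d×d symmetric matrix γ² M^s + (M^a)² is positive definite, then for every x ∈ ℝ^{2d}, exp(−t T_M) x → 0 as t → ∞. -/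
set_option linter.unusedSectionVars false

open Matrix Filter

section helpers

variable {n : Type*} [Fintype n] [DecidableEq n]

private lemma quad_continuous (A : Matrix n n ℝ) :
    Continuous fun y : n → ℝ => y ⬝ᵥ A *ᵥ y := by
  simp only [dotProduct, Matrix.mulVec]
  exact continuous_finset_sum _ fun i _ =>
    (continuous_apply i).mul (continuous_finset_sum _ fun j _ =>
      (continuous_const.mul (continuous_apply j)))

private lemma quad_smul (A : Matrix n n ℝ) (c : ℝ) (y : n → ℝ) :
    (c • y) ⬝ᵥ A *ᵥ (c • y) = c ^ 2 * (y ⬝ᵥ A *ᵥ y) := by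
  rw [Matrix.mulVec_smul, dotProduct_smul, smul_dotProduct]
  simp [smul_eq_mul]; ring

private lemma dot_self_nonneg (w : n → ℝ) : 0 ≤ w ⬝ᵥ w :=
  Finset.sum_nonneg fun _ _ => mul_self_nonneg _

private lemma dot_self_pos {w : n → ℝ} (hw : w ≠ 0) : 0 < w ⬝ᵥ w := by
  obtain ⟨i, hi⟩ := Function.ne_iff.mp hw
  exact Finset.sum_pos' (fun j _ => mul_self_nonneg (w j))
    ⟨i, Finset.mem_univ i, mul_self_pos.mpr hi⟩

private lemma quad_lower [Nonempty n] (A : Matrix n n ℝ)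
    (h : ∀ y : n → ℝ, y ≠ 0 → 0 < y ⬝ᵥ A *ᵥ y) :
    ∃ c > 0, ∀ y : n → ℝ, c * ‖y‖ ^ 2 ≤ y ⬝ᵥ A *ᵥ y := by
  obtain ⟨y₀, hy₀⟩ : ∃ y : n → ℝ, ‖y‖ = 1 :=
    ⟨Pi.single (Classical.arbitrary n) 1, by rw [Pi.norm_single]; norm_num⟩
  have hK : IsCompact (Metric.sphere (0 : n → ℝ) 1) := isCompact_sphere 0 1
  obtain ⟨z, hz, hmin⟩ := hK.exists_isMinOn
    ⟨y₀, by simp [mem_sphere_zero_iff_norm, hy₀]⟩ (quad_continuous A).continuousOn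
  have hz1 : ‖z‖ = 1 := by simpa [mem_sphere_zero_iff_norm] using hz
  have hzne : z ≠ 0 := by intro h0; rw [h0] at hz1; simp at hz1
  refine ⟨_, h z hzne, fun y => ?_⟩
  rcases eq_or_ne y 0 with rfl | hy
  · simp
  · have hn : 0 < ‖y‖ := norm_pos_iff.mpr hy
    have hu : ‖(‖y‖⁻¹ • y)‖ = 1 := by
      rw [norm_smul]; simp [abs_of_pos hn, inv_mul_cancel₀ hn.ne']
    have h1 : z ⬝ᵥ A *ᵥ z ≤ (‖y‖⁻¹ • y) ⬝ᵥ A *ᵥ (‖y‖⁻¹ • y) :=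
      hmin (by simp [mem_sphere_zero_iff_norm, hu])
    rw [quad_smul] at h1
    have h2 := mul_le_mul_of_nonneg_left h1 (pow_pos hn 2).le
    have h3 : ‖y‖ ^ 2 * ((‖y‖⁻¹) ^ 2 * (y ⬝ᵥ A *ᵥ y)) = y ⬝ᵥ A *ᵥ y := by
      field_simp
    nlinarith [h2, h3]

private lemma quad_upper [Nonempty n] (A : Matrix n n ℝ) :
    ∃ C > 0, ∀ y : n → ℝ, y ⬝ᵥ A *ᵥ y ≤ C * ‖y‖ ^ 2 := by
  obtain ⟨y₀, hy₀⟩ : ∃ y : n → ℝ, ‖y‖ = 1 :=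
    ⟨Pi.single (Classical.arbitrary n) 1, by rw [Pi.norm_single]; norm_num⟩
  have hK : IsCompact (Metric.sphere (0 : n → ℝ) 1) := isCompact_sphere 0 1
  obtain ⟨z, hz, hmax⟩ := hK.exists_isMaxOn
    ⟨y₀, by simp [mem_sphere_zero_iff_norm, hy₀]⟩ (quad_continuous A).continuousOn
  refine ⟨max (z ⬝ᵥ A *ᵥ z) 1, lt_of_lt_of_le one_pos (le_max_right _ _), fun y => ?_⟩
  rcases eq_or_ne y 0 with rfl | hy
  · simp
  · have hn : 0 < ‖y‖ := norm_pos_iff.mpr hy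
    have hu : ‖(‖y‖⁻¹ • y)‖ = 1 := by
      rw [norm_smul]; simp [abs_of_pos hn, inv_mul_cancel₀ hn.ne']
    have h1 : (‖y‖⁻¹ • y) ⬝ᵥ A *ᵥ (‖y‖⁻¹ • y) ≤ z ⬝ᵥ A *ᵥ z :=
      hmax (by simp [mem_sphere_zero_iff_norm, hu])
    rw [quad_smul] at h1
    have h2 := mul_le_mul_of_nonneg_left h1 (pow_pos hn 2).le
    have h3 : ‖y‖ ^ 2 * ((‖y‖⁻¹) ^ 2 * (y ⬝ᵥ A *ᵥ y)) = y ⬝ᵥ A *ᵥ y := by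
      field_simp
    nlinarith [h2, h3, le_max_left (z ⬝ᵥ A *ᵥ z) 1, sq_nonneg ‖y‖]

end helpers


open Matrix Filter

/-- Proposition 3.5. If the symmetric matrix `γ² Mˢ + (Mᵃ)²` is
positive definite, then `exp(−t T_M) x → 0` as `t → ∞` for every `x ∈ ℝ^{2d}`. -/
theorem stmt5 (d : ℕ) (hd : 1 ≤ d) (γ : ℝ) (hγ : 0 < γ)
    (M Ms Ma : Matrix (Fin d) (Fin d) ℝ)
    (hMs : Ms = (1 / 2 : ℝ) • (M + Mᵀ))
    (hMa : Ma = (1 / 2 : ℝ) • (M - Mᵀ))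
    (T : Matrix (Fin d ⊕ Fin d) (Fin d ⊕ Fin d) ℝ)
    (hT : T = Matrix.fromBlocks 0 (-1) M (γ • 1))
    (hpos : (γ ^ 2 • Ms + Ma * Ma).PosDef) :
    ∀ x : (Fin d ⊕ Fin d) → ℝ,
      Tendsto (fun t : ℝ => (NormedSpace.exp ((-t) • T)).mulVec x) atTop (nhds 0) := by
  intro x
  haveI : Nonempty (Fin d) := ⟨⟨0, hd⟩⟩
  have hMaT : Maᵀ = -Ma := by
    rw [hMa, Matrix.transpose_smul, Matrix.transpose_sub, Matrix.transpose_transpose]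
    module
  set P : Matrix (Fin d ⊕ Fin d) (Fin d ⊕ Fin d) ℝ :=
    fromBlocks ((γ ^ 2 / 2) • 1 + Ms) ((γ / 2) • 1) ((γ / 2) • 1) 1 with hPdef
  set S : Matrix (Fin d ⊕ Fin d) (Fin d ⊕ Fin d) ℝ := Tᵀ * P + P * T with hSdef
  have hS : S = fromBlocks (γ • Ms) (-Ma) Ma (γ • 1) := by
    rw [hSdef, hPdef, hT, fromBlocks_transpose, fromBlocks_multiply, fromBlocks_multiply,
      fromBlocks_add]
    rw [Matrix.fromBlocks_inj]
    refine ⟨?_, ?_, ?_, ?_⟩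
    · rw [hMs]
      simp only [Matrix.transpose_zero, Matrix.zero_mul, Matrix.mul_zero, Matrix.smul_mul,
        Matrix.mul_smul, Matrix.one_mul, Matrix.mul_one, Matrix.transpose_smul,
        Matrix.transpose_one, Matrix.transpose_neg]
      module
    · rw [hMa, hMs]
      simp only [Matrix.transpose_zero, Matrix.zero_mul, Matrix.mul_zero, Matrix.smul_mul,
        Matrix.mul_smul, Matrix.one_mul, Matrix.mul_one, Matrix.transpose_smul,
        Matrix.transpose_one, Matrix.transpose_neg, Matrix.mul_neg, Matrix.neg_mul]
      module
    · rw [hMa, hMs]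
      simp only [Matrix.transpose_zero, Matrix.zero_mul, Matrix.mul_zero, Matrix.smul_mul,
        Matrix.mul_smul, Matrix.one_mul, Matrix.mul_one, Matrix.transpose_smul,
        Matrix.transpose_one, Matrix.transpose_neg, Matrix.mul_neg, Matrix.neg_mul]
      module
    · simp only [Matrix.transpose_zero, Matrix.zero_mul, Matrix.mul_zero, Matrix.smul_mul,
        Matrix.mul_smul, Matrix.one_mul, Matrix.mul_one, Matrix.transpose_smul,
        Matrix.transpose_one, Matrix.transpose_neg, Matrix.mul_neg, Matrix.neg_mul]
      module
  -- quadratic form expansion over blocks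
  have hquadBlocks : ∀ (A B C D : Matrix (Fin d) (Fin d) ℝ) (y : (Fin d ⊕ Fin d) → ℝ),
      y ⬝ᵥ (fromBlocks A B C D *ᵥ y) =
        (y ∘ Sum.inl) ⬝ᵥ (A *ᵥ (y ∘ Sum.inl)) + (y ∘ Sum.inl) ⬝ᵥ (B *ᵥ (y ∘ Sum.inr))
        + ((y ∘ Sum.inr) ⬝ᵥ (C *ᵥ (y ∘ Sum.inl)) + (y ∘ Sum.inr) ⬝ᵥ (D *ᵥ (y ∘ Sum.inr))) := by
    intro A B C D y
    rw [Matrix.fromBlocks_mulVec]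
    conv_lhs => rw [← Sum.elim_comp_inl_inr y]
    rw [sumElim_dotProduct_sumElim, dotProduct_add, dotProduct_add]
    simp [Sum.elim_comp_inl, Sum.elim_comp_inr]
  have hMa_dot : ∀ u z : Fin d → ℝ, u ⬝ᵥ (Ma *ᵥ z) = -((Ma *ᵥ u) ⬝ᵥ z) := by
    intro u z
    rw [Matrix.dotProduct_mulVec, ← Matrix.mulVec_transpose, hMaT, Matrix.neg_mulVec,
      neg_dotProduct]
  have hpos' : ∀ u : Fin d → ℝ, u ≠ 0 → 0 < u ⬝ᵥ ((γ ^ 2 • Ms + Ma * Ma) *ᵥ u) := by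
    intro u hu
    simpa using hpos.dotProduct_mulVec_pos hu
  have hposexp : ∀ u : Fin d → ℝ, u ⬝ᵥ ((γ ^ 2 • Ms + Ma * Ma) *ᵥ u)
      = γ ^ 2 * (u ⬝ᵥ (Ms *ᵥ u)) - (Ma *ᵥ u) ⬝ᵥ (Ma *ᵥ u) := by
    intro u
    rw [Matrix.add_mulVec, dotProduct_add, ← Matrix.mulVec_mulVec, hMa_dot,
      Matrix.smul_mulVec, dotProduct_smul]
    simp [smul_eq_mul]
    ring
  have hMsq : ∀ u : Fin d → ℝ, u ≠ 0 → 0 < u ⬝ᵥ (Ms *ᵥ u) := by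
    intro u hu
    have h1 := hpos' u hu
    rw [hposexp] at h1
    have h3 : 0 ≤ (Ma *ᵥ u) ⬝ᵥ (Ma *ᵥ u) := dot_self_nonneg _
    nlinarith [pow_pos hγ 2]
  have hsplit : ∀ y : (Fin d ⊕ Fin d) → ℝ, y ≠ 0 → (y ∘ Sum.inl) ≠ 0 ∨
      ((y ∘ Sum.inl) = 0 ∧ (y ∘ Sum.inr) ≠ 0) := by
    intro y hy
    rcases eq_or_ne (y ∘ Sum.inl) 0 with h1 | h1
    · refine Or.inr ⟨h1, fun h2 => hy ?_⟩
      funext i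
      cases i with
      | inl a => exact congrFun h1 a
      | inr a => exact congrFun h2 a
    · exact Or.inl h1
  have hSexp : ∀ u v : Fin d → ℝ,
      u ⬝ᵥ ((γ • Ms) *ᵥ u) + u ⬝ᵥ ((-Ma) *ᵥ v)
        + (v ⬝ᵥ (Ma *ᵥ u) + v ⬝ᵥ ((γ • (1 : Matrix (Fin d) (Fin d) ℝ)) *ᵥ v))
      = γ⁻¹ * (u ⬝ᵥ ((γ ^ 2 • Ms + Ma * Ma) *ᵥ u))
        + γ * ((v + γ⁻¹ • (Ma *ᵥ u)) ⬝ᵥ (v + γ⁻¹ • (Ma *ᵥ u))) := by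
    intro u v
    have h1 : u ⬝ᵥ (Ma *ᵥ v) = -((Ma *ᵥ u) ⬝ᵥ v) := hMa_dot u v
    have h2 : v ⬝ᵥ (Ma *ᵥ u) = (Ma *ᵥ u) ⬝ᵥ v := dotProduct_comm _ _
    simp only [Matrix.neg_mulVec, dotProduct_neg, Matrix.smul_mulVec,
      Matrix.one_mulVec, dotProduct_smul, dotProduct_add, add_dotProduct,
      smul_dotProduct, hposexp, h1, h2, smul_eq_mul]
    field_simp
    ring
  have hSpos : ∀ y : (Fin d ⊕ Fin d) → ℝ, y ≠ 0 → 0 < y ⬝ᵥ (S *ᵥ y) := by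
    intro y hy
    rw [hS, hquadBlocks, hSexp]
    rcases hsplit y hy with h1 | ⟨h1, h2⟩
    · have ha := hpos' _ h1
      have hb : 0 ≤ γ * ((y ∘ Sum.inr + γ⁻¹ • (Ma *ᵥ (y ∘ Sum.inl)))
          ⬝ᵥ (y ∘ Sum.inr + γ⁻¹ • (Ma *ᵥ (y ∘ Sum.inl)))) :=
        mul_nonneg hγ.le (dot_self_nonneg _)
      have hc : 0 < γ⁻¹ * ((y ∘ Sum.inl) ⬝ᵥ ((γ ^ 2 • Ms + Ma * Ma) *ᵥ (y ∘ Sum.inl))) :=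
        mul_pos (inv_pos.mpr hγ) ha
      linarith
    · rw [h1]
      simp only [Matrix.mulVec_zero, dotProduct_zero, smul_zero, add_zero, mul_zero,
        zero_add]
      exact mul_pos hγ (dot_self_pos h2)
  have hPexp : ∀ u v : Fin d → ℝ,
      u ⬝ᵥ (((γ ^ 2 / 2) • (1 : Matrix (Fin d) (Fin d) ℝ) + Ms) *ᵥ u)
        + u ⬝ᵥ (((γ / 2) • (1 : Matrix (Fin d) (Fin d) ℝ)) *ᵥ v)
        + (v ⬝ᵥ (((γ / 2) • (1 : Matrix (Fin d) (Fin d) ℝ)) *ᵥ u) + v ⬝ᵥ ((1 : Matrix (Fin d) (Fin d) ℝ) *ᵥ v))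
      = u ⬝ᵥ (Ms *ᵥ u) + (γ ^ 2 / 4) * (u ⬝ᵥ u)
        + (v + (γ / 2) • u) ⬝ᵥ (v + (γ / 2) • u) := by
    intro u v
    have h2 : v ⬝ᵥ u = u ⬝ᵥ v := dotProduct_comm _ _
    simp only [Matrix.add_mulVec, Matrix.smul_mulVec, Matrix.one_mulVec,
      dotProduct_add, add_dotProduct, dotProduct_smul,
      smul_dotProduct, h2, smul_eq_mul]
    ring
  have hPpos : ∀ y : (Fin d ⊕ Fin d) → ℝ, y ≠ 0 → 0 < y ⬝ᵥ (P *ᵥ y) := by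
    intro y hy
    rw [hPdef, hquadBlocks, hPexp]
    rcases hsplit y hy with h1 | ⟨h1, h2⟩
    · have ha := hMsq _ h1
      have hb : 0 ≤ (γ ^ 2 / 4) * ((y ∘ Sum.inl) ⬝ᵥ (y ∘ Sum.inl)) :=
        mul_nonneg (by positivity) (dot_self_nonneg _)
      have hc : 0 ≤ (y ∘ Sum.inr + (γ / 2) • (y ∘ Sum.inl))
          ⬝ᵥ (y ∘ Sum.inr + (γ / 2) • (y ∘ Sum.inl)) := dot_self_nonneg _
      linarith
    · rw [h1]
      simp only [Matrix.mulVec_zero, dotProduct_zero, zero_dotProduct, smul_zero,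
        add_zero, mul_zero, zero_add]
      exact dot_self_pos h2
  obtain ⟨α, hα, hSlow⟩ := quad_lower S hSpos
  obtain ⟨β, hβ, hPup⟩ := quad_upper P
  obtain ⟨p, hp, hPlow⟩ := quad_lower P hPpos
  letI : SeminormedRing (Matrix (Fin d ⊕ Fin d) (Fin d ⊕ Fin d) ℝ) :=
    Matrix.linftyOpSemiNormedRing
  letI : NormedRing (Matrix (Fin d ⊕ Fin d) (Fin d ⊕ Fin d) ℝ) :=
    Matrix.linftyOpNormedRing
  letI : NormedAlgebra ℝ (Matrix (Fin d ⊕ Fin d) (Fin d ⊕ Fin d) ℝ) :=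
    Matrix.linftyOpNormedAlgebra
  letI : CompleteSpace (Matrix (Fin d ⊕ Fin d) (Fin d ⊕ Fin d) ℝ) :=
    FiniteDimensional.complete ℝ _
  have hE : ∀ t : ℝ, HasDerivAt (fun s : ℝ => NormedSpace.exp ((-s) • T))
      (-(T * NormedSpace.exp ((-t) • T))) t := by
    intro t
    have h1 := hasDerivAt_exp_smul_const' (𝕂 := ℝ) T (-t)
    have h2 : HasDerivAt (fun s : ℝ => -s) (-1) t := (hasDerivAt_id t).neg
    have h3 := h1.scomp t h2
    simp [Function.comp_def] at h3 ⊢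
    exact h3
  let L : Matrix (Fin d ⊕ Fin d) (Fin d ⊕ Fin d) ℝ →ₗ[ℝ] ((Fin d ⊕ Fin d) → ℝ) :=
    { toFun := fun A => A *ᵥ x
      map_add' := fun A B => Matrix.add_mulVec A B x
      map_smul' := fun c A => Matrix.smul_mulVec c A x }
  let Lc := LinearMap.toContinuousLinearMap L
  have hxd : ∀ t : ℝ, HasDerivAt (fun t : ℝ => (NormedSpace.exp ((-t) • T)) *ᵥ x)
      (-(T *ᵥ ((NormedSpace.exp ((-t) • T)) *ᵥ x))) t := by
    intro t
    have h1 := (Lc.hasFDerivAt (x := NormedSpace.exp ((-t) • T))).comp_hasDerivAt t (hE t)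
    have h2 : Lc (-(T * NormedSpace.exp ((-t) • T)))
        = -(T *ᵥ ((NormedSpace.exp ((-t) • T)) *ᵥ x)) := by
      show (-(T * NormedSpace.exp ((-t) • T))) *ᵥ x = _
      rw [Matrix.neg_mulVec, Matrix.mulVec_mulVec]
    exact h1.congr_deriv h2
  set xf : ℝ → ((Fin d ⊕ Fin d) → ℝ) := fun t => (NormedSpace.exp ((-t) • T)) *ᵥ x with hxf
  have hxi : ∀ (t : ℝ) (i : Fin d ⊕ Fin d), HasDerivAt (fun t : ℝ => xf t i)
      ((-(T *ᵥ xf t)) i) t := by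
    intro t i
    have h1 := (ContinuousLinearMap.proj (R := ℝ) (φ := fun _ : Fin d ⊕ Fin d => ℝ)
      i).hasFDerivAt.comp_hasDerivAt t (hxd t)
    exact h1
  have key : ∀ y : (Fin d ⊕ Fin d) → ℝ,
      (∑ i, ((-(T *ᵥ y)) i * ∑ j, P i j * y j + y i * ∑ j, P i j * (-(T *ᵥ y)) j))
        = -(y ⬝ᵥ (S *ᵥ y)) := by
    intro y
    have e0 : ∀ z w : (Fin d ⊕ Fin d) → ℝ, z ⬝ᵥ (P *ᵥ w) = ∑ i, z i * ∑ j, P i j * w j := by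
      intro z w
      simp [dotProduct, Matrix.mulVec]
    have e1 : (T *ᵥ y) ⬝ᵥ (P *ᵥ y) = y ⬝ᵥ ((Tᵀ * P) *ᵥ y) := by
      rw [← Matrix.mulVec_mulVec, Matrix.dotProduct_mulVec y, Matrix.vecMul_transpose]
    have e2 : y ⬝ᵥ (P *ᵥ (T *ᵥ y)) = y ⬝ᵥ ((P * T) *ᵥ y) := by rw [Matrix.mulVec_mulVec]
    calc (∑ i, ((-(T *ᵥ y)) i * ∑ j, P i j * y j + y i * ∑ j, P i j * (-(T *ᵥ y)) j))
        = (-(T *ᵥ y)) ⬝ᵥ (P *ᵥ y) + y ⬝ᵥ (P *ᵥ (-(T *ᵥ y))) := by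
          rw [Finset.sum_add_distrib, e0, e0]
      _ = -((T *ᵥ y) ⬝ᵥ (P *ᵥ y) + y ⬝ᵥ (P *ᵥ (T *ᵥ y))) := by
          rw [neg_dotProduct, Matrix.mulVec_neg, dotProduct_neg]
          ring
      _ = -(y ⬝ᵥ (S *ᵥ y)) := by
          rw [e1, e2, hSdef, Matrix.add_mulVec, dotProduct_add]
  have hfd : ∀ t : ℝ, HasDerivAt (fun t => xf t ⬝ᵥ (P *ᵥ xf t))
      (-(xf t ⬝ᵥ (S *ᵥ xf t))) t := by
    intro t
    have hsum : HasDerivAt (fun t => ∑ i, xf t i * ∑ j, P i j * xf t j)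
        (∑ i, ((-(T *ᵥ xf t)) i * ∑ j, P i j * xf t j
          + xf t i * ∑ j, P i j * (-(T *ᵥ xf t)) j)) t := by
      apply HasDerivAt.fun_sum
      intro i _
      exact (hxi t i).mul (HasDerivAt.fun_sum fun j _ => (hxi t j).const_mul (P i j))
    rw [key] at hsum
    convert hsum using 1
    rfl
  set c : ℝ := α / β with hc
  have hcpos : 0 < c := div_pos hα hβ
  set f : ℝ → ℝ := fun t => xf t ⬝ᵥ (P *ᵥ xf t) with hf
  have hflow : ∀ t : ℝ, -(xf t ⬝ᵥ (S *ᵥ xf t)) ≤ -(c * f t) := by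
    intro t
    have h1 := hSlow (xf t)
    have h2 := hPup (xf t)
    have h3 : c * f t ≤ c * (β * ‖xf t‖ ^ 2) := mul_le_mul_of_nonneg_left h2 hcpos.le
    have h4 : c * (β * ‖xf t‖ ^ 2) = α * ‖xf t‖ ^ 2 := by
      rw [hc]; field_simp
    linarith
  set g : ℝ → ℝ := fun t => f t * Real.exp (c * t) with hg
  have hgd : ∀ t : ℝ, HasDerivAt g
      (-(xf t ⬝ᵥ (S *ᵥ xf t)) * Real.exp (c * t) + f t * (Real.exp (c * t) * c)) t := by
    intro t
    have he : HasDerivAt (fun t : ℝ => Real.exp (c * t)) (Real.exp (c * t) * c) t := by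
      have h1 : HasDerivAt (fun t : ℝ => c * t) (c * 1) t := (hasDerivAt_id t).const_mul c
      have := (Real.hasDerivAt_exp (c * t)).comp t h1
      simpa [Function.comp_def, mul_comm] using this
    exact (hfd t).mul he
  have hganti : Antitone g := by
    apply antitone_of_deriv_nonpos
    · exact fun t => (hgd t).differentiableAt
    · intro t
      rw [(hgd t).deriv]
      have h0 : -(xf t ⬝ᵥ (S *ᵥ xf t)) * Real.exp (c * t) + f t * (Real.exp (c * t) * c)
          = (-(xf t ⬝ᵥ (S *ᵥ xf t)) + c * f t) * Real.exp (c * t) := by ring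
      rw [h0]
      apply mul_nonpos_of_nonpos_of_nonneg
      · linarith [hflow t]
      · exact (Real.exp_pos _).le
  have hfb : ∀ t : ℝ, 0 ≤ t → f t ≤ f 0 * Real.exp (-(c * t)) := by
    intro t ht
    have h1 : g t ≤ g 0 := hganti ht
    have h2 : f t * Real.exp (c * t) ≤ f 0 := by simpa [hg] using h1
    have h3 : f t = f t * Real.exp (c * t) * Real.exp (-(c * t)) := by
      rw [mul_assoc, ← Real.exp_add]; simp
    rw [h3]
    exact mul_le_mul_of_nonneg_right h2 (Real.exp_nonneg _)
  have hnorm2 : Tendsto (fun t => ‖xf t‖ ^ 2) atTop (nhds 0) := by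
    have hub : ∀ᶠ t in atTop, ‖xf t‖ ^ 2 ≤ (f 0 / p) * Real.exp (-(c * t)) := by
      filter_upwards [eventually_ge_atTop (0 : ℝ)] with t ht
      have h1 := hPlow (xf t)
      have h2 := hfb t ht
      have h3 : ‖xf t‖ ^ 2 ≤ f t / p := by
        rw [le_div_iff₀ hp]
        calc ‖xf t‖ ^ 2 * p = p * ‖xf t‖ ^ 2 := by ring
        _ ≤ f t := hPlow (xf t)
      calc ‖xf t‖ ^ 2 ≤ f t / p := h3
      _ ≤ (f 0 * Real.exp (-(c * t))) / p :=
          (div_le_div_iff_of_pos_right hp).mpr (hfb t ht)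
      _ = (f 0 / p) * Real.exp (-(c * t)) := by ring
    have hlb : ∀ᶠ t in atTop, (0 : ℝ) ≤ ‖xf t‖ ^ 2 :=
      Eventually.of_forall fun t => sq_nonneg _
    have hO : Tendsto (fun t : ℝ => (f 0 / p) * Real.exp (-(c * t))) atTop (nhds 0) := by
      have h1 : Tendsto (fun t : ℝ => c * t) atTop atTop :=
        Tendsto.const_mul_atTop hcpos tendsto_id
      have h2 : Tendsto (fun t : ℝ => -(c * t)) atTop atBot :=
        tendsto_neg_atTop_atBot.comp h1
      have h3 : Tendsto (fun t : ℝ => Real.exp (-(c * t))) atTop (nhds 0) :=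
        Real.tendsto_exp_atBot.comp h2
      simpa using h3.const_mul (f 0 / p)
    exact tendsto_of_tendsto_of_tendsto_of_le_of_le' tendsto_const_nhds hO hlb hub
  have hnorm : Tendsto (fun t => ‖xf t‖) atTop (nhds 0) := by
    have h1 := (Real.continuous_sqrt.tendsto 0).comp hnorm2
    simp only [Function.comp_def, Real.sqrt_zero] at h1
    have h2 : (fun t => Real.sqrt (‖xf t‖ ^ 2)) = fun t => ‖xf t‖ := by
      funext t
      exact Real.sqrt_sq (norm_nonneg _)
    rwa [h2] at h1
  exact tendsto_zero_iff_norm_tendsto_zero.mpr hnorm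
end

section
/- Under Assumption (A), let λ > 0 satisfy λ(γ−λ)/2 ≤ α, 2λ/(γ−λ) ≤ α, and β² ≤ γ(γ−λ), and define H(q,p) = (1/2)|p|² + ((γ−λ)/2)⟨q, p⟩ + ((γ−λ)²/4)|q|² + U(q). Then along any solution X_t = (q_t, p_t) of the zero-noise underdamped dynamics, the function t ↦ H(X_t) is differentiable and (d/dt) H(X_t) ≤ −λ H(X_t) for all t ≥ 0. -/
set_option maxHeartbeats 1000000


/-- Lemma 4.3. Under Assumption (A), with `lam > 0` satisfying
`lam(γ−lam)/2 ≤ α`, `2lam/(γ−lam) ≤ α`, `β² ≤ γ(γ−lam)`, the Lyapunov function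
`H(q,p) = ½|p|² + ((γ−lam)/2)⟨q,p⟩ + ((γ−lam)²/4)|q|² + U(q)` satisfies, along any
solution `X_t = (q_t, p_t)` of the zero-noise underdamped dynamics, that `t ↦ H(X_t)`
is differentiable with `(d/dt)H(X_t) ≤ −lam H(X_t)` for all `t ≥ 0`. -/
theorem stmt9 (d : ℕ) (hd : 1 ≤ d) (γ : ℝ) (hγ : 0 < γ)
    (F : EuclideanSpace ℝ (Fin d) → EuclideanSpace ℝ (Fin d))
    (U : EuclideanSpace ℝ (Fin d) → ℝ)
    (L : EuclideanSpace ℝ (Fin d) → EuclideanSpace ℝ (Fin d))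
    (α β : ℝ)
    (hF : ContDiff ℝ 3 F) (hU : ContDiff ℝ 4 U) (hU0 : ∀ q, 0 ≤ U q)
    (hL : ContDiff ℝ 3 L)
    (hdec : ∀ q, F q = gradient U q + L q)
    (hα : 0 < α) (hβ0 : 0 < β) (hβγ : β < γ)
    (hcoer : ∀ q, (inner ℝ (F q) q : ℝ) ≥ α * (‖q‖ ^ 2 + U q) + ‖L q‖ ^ 2 / β ^ 2)
    (lam : ℝ) (hlam0 : 0 < lam)
    (hc1 : lam * (γ - lam) / 2 ≤ α) (hc2 : 2 * lam / (γ - lam) ≤ α)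
    (hc3 : β ^ 2 ≤ γ * (γ - lam))
    (H : EuclideanSpace ℝ (Fin d) × EuclideanSpace ℝ (Fin d) → ℝ)
    (hH : ∀ q p, H (q, p) =
      (1 / 2) * ‖p‖ ^ 2 + ((γ - lam) / 2) * (inner ℝ q p : ℝ)
        + ((γ - lam) ^ 2 / 4) * ‖q‖ ^ 2 + U q)
    (q p : ℝ → EuclideanSpace ℝ (Fin d))
    (hq : ∀ t : ℝ, HasDerivAt q (p t) t)
    (hp : ∀ t : ℝ, HasDerivAt p (-F (q t) - γ • p t) t) :
    ∀ t ≥ (0 : ℝ), ∃ h' : ℝ,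
      HasDerivAt (fun s => H (q s, p s)) h' t ∧ h' ≤ -lam * H (q t, p t) := by
  intro t _
  have hgl : 0 < γ - lam := by nlinarith [sq_nonneg β]
  set Q := q t
  set P := p t
  set V : EuclideanSpace ℝ (Fin d) := -F Q - γ • P with hV
  -- differentiability of U along the curve
  have hUdiff : DifferentiableAt ℝ U Q :=
    (hU.differentiable (by norm_num)).differentiableAt
  have hUcomp : HasDerivAt (fun s => U (q s))
      ((inner ℝ (gradient U Q) P : ℝ)) t := by
    have := hUdiff.hasGradientAt.hasFDerivAt.comp_hasDerivAt t (hq t)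
    simpa [InnerProductSpace.toDual_apply_apply, Function.comp_def, P] using this
  have hpp : HasDerivAt (fun s => (inner ℝ (p s) (p s) : ℝ))
      ((inner ℝ P V : ℝ) + (inner ℝ V P : ℝ)) t := (hp t).inner ℝ (hp t)
  have hqp : HasDerivAt (fun s => (inner ℝ (q s) (p s) : ℝ))
      ((inner ℝ Q V : ℝ) + (inner ℝ P P : ℝ)) t := (hq t).inner ℝ (hp t)
  have hqq : HasDerivAt (fun s => (inner ℝ (q s) (q s) : ℝ))
      ((inner ℝ Q P : ℝ) + (inner ℝ P Q : ℝ)) t := (hq t).inner ℝ (hq t)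
  set h' : ℝ := (1/2) * ((inner ℝ P V : ℝ) + (inner ℝ V P : ℝ))
      + ((γ - lam)/2) * ((inner ℝ Q V : ℝ) + (inner ℝ P P : ℝ))
      + ((γ - lam)^2/4) * ((inner ℝ Q P : ℝ) + (inner ℝ P Q : ℝ))
      + (inner ℝ (gradient U Q) P : ℝ) with hh'
  have hderiv : HasDerivAt (fun s => H (q s, p s)) h' t := by
    have key : HasDerivAt (fun s => (1/2) * (inner ℝ (p s) (p s) : ℝ)
        + ((γ - lam)/2) * (inner ℝ (q s) (p s) : ℝ)
        + ((γ - lam)^2/4) * (inner ℝ (q s) (q s) : ℝ) + U (q s)) h' t :=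
      (((hpp.const_mul (1/2:ℝ)).add (hqp.const_mul ((γ - lam)/2))).add
        (hqq.const_mul ((γ - lam)^2/4))).add hUcomp
    refine key.congr_of_eventuallyEq ?_
    filter_upwards with s
    rw [hH, real_inner_self_eq_norm_sq, real_inner_self_eq_norm_sq]
  refine ⟨h', hderiv, ?_⟩
  -- identify the terms
  have hsymQP : (inner ℝ P Q : ℝ) = (inner ℝ Q P : ℝ) := real_inner_comm _ _
  have hPV : (inner ℝ P V : ℝ) = -(inner ℝ P (F Q) : ℝ) - γ * ‖P‖^2 := by
    rw [hV, inner_sub_right, inner_neg_right, inner_smul_right,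
      real_inner_self_eq_norm_sq]
  have hVP : (inner ℝ V P : ℝ) = -(inner ℝ P (F Q) : ℝ) - γ * ‖P‖^2 := by
    rw [real_inner_comm]; exact hPV
  have hQV : (inner ℝ Q V : ℝ) = -(inner ℝ (F Q) Q : ℝ) - γ * (inner ℝ Q P : ℝ) := by
    rw [hV, inner_sub_right, inner_neg_right, inner_smul_right, real_inner_comm]
  have hgradU : (inner ℝ (gradient U Q) P : ℝ)
      = (inner ℝ P (F Q) : ℝ) - (inner ℝ (L Q) P : ℝ) := by
    have h1 : gradient U Q = F Q - L Q := by rw [hdec Q]; abel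
    rw [h1, inner_sub_left, real_inner_comm (F Q) P]
  have hPP : (inner ℝ P P : ℝ) = ‖P‖^2 := real_inner_self_eq_norm_sq P
  have hHt : H (Q, P) = (1/2)*‖P‖^2 + ((γ - lam)/2) * (inner ℝ Q P : ℝ)
      + ((γ-lam)^2/4)*‖Q‖^2 + U Q := hH Q P
  -- estimates
  have hcoerQ := hcoer Q
  have hCS : -(inner ℝ (L Q) P : ℝ) ≤ ‖L Q‖ * ‖P‖ := by
    have h1 := abs_real_inner_le_norm (L Q) P
    have h2 := neg_abs_le (inner ℝ (L Q) P : ℝ)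
    linarith
  have hUQ := hU0 Q
  have hβ2 : (0:ℝ) < β^2 := by positivity
  have hq2 : (0:ℝ) ≤ ‖Q‖^2 := sq_nonneg _
  have hc2' : lam ≤ ((γ - lam)/2) * α := by
    have h1 : 2 * lam / (γ - lam) * (γ - lam) ≤ α * (γ - lam) :=
      mul_le_mul_of_nonneg_right hc2 hgl.le
    rw [div_mul_cancel₀ _ (ne_of_gt hgl)] at h1
    nlinarith
  have hkey : ‖L Q‖ * ‖P‖ ≤ γ/2 * ‖P‖^2 + ((γ - lam)/2) * (‖L Q‖^2 / β^2) := by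
    have hL2 : ‖L Q‖^2 / (2*γ) ≤ ((γ - lam)/2) * (‖L Q‖^2 / β^2) := by
      rw [← mul_div_assoc, div_le_div_iff₀ (by positivity) hβ2]
      have h3 := mul_le_mul_of_nonneg_left hc3 (sq_nonneg ‖L Q‖)
      linarith [h3]
    have hAM : ‖L Q‖ * ‖P‖ ≤ γ/2 * ‖P‖^2 + ‖L Q‖^2 / (2*γ) := by
      rw [← sub_nonneg]
      have heq : γ/2 * ‖P‖^2 + ‖L Q‖^2 / (2*γ) - ‖L Q‖ * ‖P‖
          = (γ * ‖P‖ - ‖L Q‖)^2 / (2*γ) := by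
        field_simp; ring
      rw [heq]; positivity
    linarith [hAM, hL2]
  have hcoer' : -(((γ - lam)/2) * (inner ℝ (F Q) Q : ℝ))
      ≤ -(((γ - lam)/2) * (α * (‖Q‖^2 + U Q) + ‖L Q‖^2 / β^2)) := by
    have := mul_le_mul_of_nonneg_left hcoerQ (by positivity : (0:ℝ) ≤ (γ - lam)/2)
    linarith
  have e1 : lam * ((γ-lam)^2/4) * ‖Q‖^2 ≤ ((γ - lam)/2) * α * ‖Q‖^2 := by
    have h := mul_le_mul_of_nonneg_right hc1
      (mul_nonneg (by positivity : (0:ℝ) ≤ (γ - lam)/2) hq2)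
    nlinarith [h]
  have e2 : lam * U Q ≤ ((γ - lam)/2) * α * U Q := by nlinarith
  rw [hh', hHt, hPV, hVP, hQV, hgradU, hPP, hsymQP]
  nlinarith [hcoer', e1, e2, hkey, hCS]
end

section
/- Under Assumption (A), every complex eigenvalue of the Jacobian matrix DF(0) of F at the origin has positive real part; in particular, DF(0) is invertible. -/
set_option maxHeartbeats 1000000 in
/-- Corollary 4.4. Under Assumption (A), every complex eigenvalue of
the Jacobian matrix `DF(0)` has positive real part; in particular `DF(0)` is
invertible. -/
theorem stmt10 (d : ℕ) (hd : 1 ≤ d) (γ : ℝ) (hγ : 0 < γ)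
    (F : EuclideanSpace ℝ (Fin d) → EuclideanSpace ℝ (Fin d))
    (U : EuclideanSpace ℝ (Fin d) → ℝ)
    (L : EuclideanSpace ℝ (Fin d) → EuclideanSpace ℝ (Fin d))
    (α β : ℝ)
    (hF : ContDiff ℝ 3 F) (hU : ContDiff ℝ 4 U) (hU0 : ∀ q, 0 ≤ U q)
    (hL : ContDiff ℝ 3 L)
    (hdec : ∀ q, F q = gradient U q + L q)
    (hα : 0 < α) (hβ0 : 0 < β) (hβγ : β < γ)
    (hcoer : ∀ q, (inner ℝ (F q) q : ℝ) ≥ α * (‖q‖ ^ 2 + U q) + ‖L q‖ ^ 2 / β ^ 2)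
    (DF0 : Matrix (Fin d) (Fin d) ℝ)
    (hDF0 : ∀ i j, DF0 i j = fderiv ℝ F 0 (EuclideanSpace.single j 1) i) :
    (∀ z ∈ spectrum ℂ ((DF0.map Complex.ofReal : Matrix (Fin d) (Fin d) ℂ)), 0 < z.re)
      ∧ IsUnit DF0 := by
  have hFd : Differentiable ℝ F := hF.differentiable (by norm_num)
  -- Step A : F 0 = 0
  have h0 := hcoer 0
  rw [inner_zero_right] at h0
  simp only [norm_zero] at h0
  have hU00 : U 0 = 0 := by
    have h1 : 0 ≤ ‖L 0‖ ^ 2 / β ^ 2 := by positivity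
    nlinarith [hU0 0]
  have hL0 : L 0 = 0 := by
    have h1 : ‖L 0‖ ^ 2 / β ^ 2 = 0 :=
      le_antisymm (by nlinarith [hU0 0]) (by positivity)
    have h2 : ‖L 0‖ ^ 2 = 0 := by
      rcases div_eq_zero_iff.mp h1 with h | h
      · exact h
      · nlinarith
    have : ‖L 0‖ = 0 := by nlinarith [norm_nonneg (L 0)]
    exact norm_eq_zero.mp this
  have hgrad0 : gradient U 0 = 0 := by
    have hmin : IsLocalMin U 0 := by
      apply Filter.Eventually.mono (Filter.univ_mem)
      intro x _
      rw [hU00]; exact hU0 x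
    rw [gradient, hmin.fderiv_eq_zero]
    simp
  have hF0 : F 0 = 0 := by rw [hdec 0, hgrad0, hL0, add_zero]
  set A := fderiv ℝ F 0 with hA_def
  -- Step B : quadratic form bound
  have hAq : ∀ q : EuclideanSpace ℝ (Fin d), α * ‖q‖ ^ 2 ≤ (inner ℝ q (A q) : ℝ) := by
    intro q
    have hA : HasFDerivAt F A 0 := (hFd 0).hasFDerivAt
    have hsm : HasDerivAt (fun t : ℝ => t • q) q 0 := by
      simpa using (hasDerivAt_id (0 : ℝ)).smul_const q
    have hcomp : HasDerivAt (fun t : ℝ => F (t • q)) (A q) 0 := by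
      have hA' : HasFDerivAt F A ((0:ℝ) • q) := by simpa using hA
      exact hA'.comp_hasDerivAt (0:ℝ) hsm
    have hg : HasDerivAt (fun t : ℝ => (inner ℝ q (F (t • q)) : ℝ)) (inner ℝ q (A q) : ℝ) 0 := by
      have := (innerSL ℝ q).hasFDerivAt.comp_hasDerivAt (x := (0:ℝ)) hcomp
      exact this
    have hslope := hasDerivAt_iff_tendsto_slope.mp hg
    have h2 : Filter.Tendsto (slope (fun t : ℝ => (inner ℝ q (F (t • q)) : ℝ)) 0)
        (nhdsWithin 0 (Set.Ioi 0)) (nhds (inner ℝ q (A q) : ℝ)) :=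
      hslope.mono_left (nhdsWithin_mono 0 (fun x hx => ne_of_gt hx))
    refine ge_of_tendsto h2 ?_
    filter_upwards [self_mem_nhdsWithin] with t ht
    have ht0 : (0:ℝ) < t := ht
    rw [slope_def_field]
    have h3 := hcoer (t • q)
    have h4 : (inner ℝ (F (t • q)) (t • q) : ℝ) = t * (inner ℝ q (F (t • q)) : ℝ) := by
      rw [real_inner_smul_right, real_inner_comm]
    have h5 : ‖t • q‖ ^ 2 = t ^ 2 * ‖q‖ ^ 2 := by
      rw [norm_smul]; rw [mul_pow]; rw [Real.norm_eq_abs, sq_abs]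
    have h6 : 0 ≤ ‖L (t • q)‖ ^ 2 / β ^ 2 := by positivity
    have h7 : α * (t ^ 2 * ‖q‖ ^ 2) ≤ t * (inner ℝ q (F (t • q)) : ℝ) := by
      rw [← h5, ← h4]
      nlinarith [hU0 (t • q)]
    have h8 : (inner ℝ q (F ((0:ℝ) • q)) : ℝ) = 0 := by
      simp [hF0]
    rw [h8]
    rw [sub_zero, sub_zero, le_div_iff₀ ht0]
    nlinarith
  -- representation of A via DF0
  have hrep : ∀ (q : EuclideanSpace ℝ (Fin d)) (i : Fin d),
      A q i = ∑ j, DF0 i j * q j := by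
    intro q i
    have hq : q = ∑ j, q j • EuclideanSpace.single j (1:ℝ) := by
      ext k
      rw [WithLp.ofLp_sum, Finset.sum_apply]
      simp [EuclideanSpace.single_apply]
    calc A q i = (EuclideanSpace.proj (𝕜 := ℝ) i) (A q) := rfl
      _ = ∑ j, DF0 i j * q j := by
          conv_lhs => rw [hq, map_sum A, map_sum (EuclideanSpace.proj (𝕜 := ℝ) i)]
          refine Finset.sum_congr rfl fun j _ => ?_
          simp only [map_smul, smul_eq_mul, PiLp.proj_apply, hDF0]
          ring
  -- key real-vector inequality
  have hkey : ∀ u : Fin d → ℝ, α * (∑ j, u j ^ 2) ≤ ∑ j, (∑ k, DF0 j k * u k) * u j := by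
    intro u
    set q : EuclideanSpace ℝ (Fin d) := (WithLp.equiv 2 (Fin d → ℝ)).symm u with hq_def
    have hqj : ∀ j, q j = u j := fun j => rfl
    have h1 := hAq q
    have h2 : (inner ℝ q (A q) : ℝ) = ∑ j, (∑ k, DF0 j k * u k) * q j := by
      rw [real_inner_comm]
      rw [PiLp.inner_apply]
      refine Finset.sum_congr rfl fun j _ => ?_
      rw [RCLike.inner_apply, starRingEnd_apply, star_trivial, hrep q j]
      simp only [hqj]; ring
    have h3 : ‖q‖ ^ 2 = ∑ j, u j ^ 2 := by
      rw [← real_inner_self_eq_norm_sq, PiLp.inner_apply]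
      refine Finset.sum_congr rfl fun j _ => ?_
      rw [RCLike.inner_apply, starRingEnd_apply, star_trivial, hqj]
      ring
    rw [h3] at h1
    rw [h2] at h1
    simpa only [hqj] using h1
  -- spectrum part
  have hspec : ∀ z ∈ spectrum ℂ ((DF0.map Complex.ofReal : Matrix (Fin d) (Fin d) ℂ)),
      0 < z.re := by
    intro z hz
    rw [spectrum.mem_iff] at hz
    have hdet : ((algebraMap ℂ (Matrix (Fin d) (Fin d) ℂ)) z - DF0.map Complex.ofReal).det = 0 := by
      by_contra h
      exact hz ((Matrix.isUnit_iff_isUnit_det _).mpr (isUnit_iff_ne_zero.mpr h))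
    obtain ⟨v, hv0, hv⟩ := Matrix.exists_mulVec_eq_zero_iff.mpr hdet
    have hMv : (DF0.map Complex.ofReal).mulVec v = z • v := by
      rw [Matrix.sub_mulVec] at hv
      have h1 : ((algebraMap ℂ (Matrix (Fin d) (Fin d) ℂ)) z).mulVec v = z • v := by
        rw [Algebra.algebraMap_eq_smul_one, Matrix.smul_mulVec, Matrix.one_mulVec]
      rw [h1] at hv
      rw [sub_eq_zero] at hv
      exact hv.symm
    set u : Fin d → ℝ := fun j => (v j).re with hu_def
    set w : Fin d → ℝ := fun j => (v j).im with hw_def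
    have hcomp : ∀ j, (∑ k, (DF0 j k : ℂ) * v k) = z * v j := by
      intro j
      have := congrFun hMv j
      simpa [Matrix.mulVec, dotProduct, Matrix.map_apply] using this
    have hre : ∀ j, (∑ k, DF0 j k * u k) = z.re * u j - z.im * w j := by
      intro j
      have := congrArg Complex.re (hcomp j)
      simpa [Complex.re_sum, Complex.mul_re] using this
    have him : ∀ j, (∑ k, DF0 j k * w k) = z.re * w j + z.im * u j := by
      intro j
      have := congrArg Complex.im (hcomp j)
      simpa [Complex.im_sum, Complex.mul_im] using this
    have h1 := hkey u
    have h2 := hkey w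
    have hN : 0 < ∑ j, (u j ^ 2 + w j ^ 2) := by
      have hvex : ∃ j, v j ≠ 0 := by
        by_contra h
        push_neg at h
        exact hv0 (funext h)
      obtain ⟨j, hj⟩ := hvex
      refine Finset.sum_pos' (fun k _ => by positivity) ⟨j, Finset.mem_univ j, ?_⟩
      have : u j ≠ 0 ∨ w j ≠ 0 := by
        by_contra h
        push_neg at h
        exact hj (Complex.ext h.1 h.2)
      rcases this with h | h
      · positivity
      · positivity
    have hsum : (∑ j, (∑ k, DF0 j k * u k) * u j) + (∑ j, (∑ k, DF0 j k * w k) * w j)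
        = z.re * ∑ j, (u j ^ 2 + w j ^ 2) := by
      rw [← Finset.sum_add_distrib, Finset.mul_sum]
      refine Finset.sum_congr rfl fun j _ => ?_
      rw [hre j, him j]
      ring
    have hαN : α * ∑ j, (u j ^ 2 + w j ^ 2) ≤ z.re * ∑ j, (u j ^ 2 + w j ^ 2) := by
      rw [← hsum]
      have : α * ∑ j, (u j ^ 2 + w j ^ 2) = α * (∑ j, u j ^ 2) + α * (∑ j, w j ^ 2) := by
        rw [Finset.sum_add_distrib]; ring
      rw [this]
      exact add_le_add h1 h2
    have : α ≤ z.re := le_of_mul_le_mul_right (by linarith [hαN]) hN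
    linarith
  refine ⟨hspec, ?_⟩
  rw [Matrix.isUnit_iff_isUnit_det, isUnit_iff_ne_zero]
  intro hdet0
  have hdetC : (DF0.map Complex.ofReal).det = 0 := by
    have := RingHom.map_det Complex.ofRealHom DF0
    rw [hdet0] at this
    simp only [map_zero] at this
    exact this.symm
  have h0 : (0:ℂ) ∈ spectrum ℂ ((DF0.map Complex.ofReal : Matrix (Fin d) (Fin d) ℂ)) := by
    rw [spectrum.mem_iff, map_zero, zero_sub, Matrix.isUnit_iff_isUnit_det, Matrix.det_neg,
      hdetC, mul_zero]
    exact fun h => (isUnit_iff_ne_zero.mp h) rfl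
  have := hspec 0 h0
  simp at this
end

section
/- Let d ≥ 1, let W be a 2d×2d real symmetric positive semidefinite matrix such that for some a > 0 one has ⟨x, W x⟩ ≥ a|p|² for all x = (q, p) ∈ ℝ^d × ℝ^d, and let U be a 2d×2d real matrix all of whose complex eigenvalues have negative real part and whose lower-left d×d block U₂₁ (in the block decomposition U = [[U₁₁, U₁₂],[U₂₁, U₂₂]]) is invertible. Then there exists a unique 2d×2d real matrix X satisfying Uᵀ X + X U = −W, and this X is symmetric and positive definite. -/
open Matrix Polynomial

variable {n : Type*} [Fintype n] [DecidableEq n]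

private lemma pow_comm_aux {R : Type*} [CommRing R] (B C X : Matrix n n R)
    (h : B * X = X * C) : ∀ m : ℕ, B ^ m * X = X * C ^ m := by
  intro m
  induction m with
  | zero => simp
  | succ k ih =>
    rw [pow_succ, pow_succ, mul_assoc, h, ← mul_assoc, ih, mul_assoc]

private lemma aeval_comm_aux {R : Type*} [CommRing R] (B C X : Matrix n n R)
    (h : B * X = X * C) (q : R[X]) :
    (aeval B q) * X = X * (aeval C q) := by
  rw [Polynomial.aeval_eq_sum_range, Polynomial.aeval_eq_sum_range]
  rw [Finset.sum_mul, Finset.mul_sum]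
  exact Finset.sum_congr rfl fun i _ => by
    rw [smul_mul_assoc, mul_smul_comm, pow_comm_aux B C X h]

private lemma isUnit_transpose_iff {R : Type*} [CommRing R] (M : Matrix n n R) :
    IsUnit Mᵀ ↔ IsUnit M := by
  rw [Matrix.isUnit_iff_isUnit_det, Matrix.isUnit_iff_isUnit_det, Matrix.det_transpose]

private lemma eval_charpoly_aux {R : Type*} [CommRing R] (M : Matrix n n R) (t : R) :
    M.charpoly.eval t = ((algebraMap R (Matrix n n R)) t - M).det := by
  rw [Matrix.charpoly, ← Polynomial.coe_evalRingHom, RingHom.map_det]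
  congr 1
  ext i j
  by_cases h : i = j <;>
    simp [charmatrix_apply, h, Matrix.one_apply, Matrix.algebraMap_matrix_apply,
      Matrix.diagonal_apply]

private lemma spectrum_transpose_subset (M : Matrix n n ℂ) :
    spectrum ℂ Mᵀ ⊆ spectrum ℂ M := by
  intro z hz
  rw [spectrum.mem_iff] at hz ⊢
  intro hc
  apply hz
  have : (algebraMap ℂ (Matrix n n ℂ)) z - Mᵀ = ((algebraMap ℂ (Matrix n n ℂ)) z - M)ᵀ := by
    simp [Algebra.algebraMap_eq_smul_one, Matrix.transpose_sub, Matrix.transpose_smul]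
  rw [this, isUnit_transpose_iff]
  exact hc

private lemma key_unit (A : Matrix n n ℂ) (hA : ∀ z ∈ spectrum ℂ A, z.re < 0) :
    IsUnit (aeval Aᵀ ((-A).charpoly)) := by
  have hfac := (IsAlgClosed.splits ((-A).charpoly)).eq_prod_roots_of_monic
    ((-A).charpoly_monic)
  have hroot : ∀ μ ∈ (-A).charpoly.roots, IsUnit (aeval Aᵀ (X - C μ)) := by
    intro μ hμ
    have hμroot : (-A).charpoly.eval μ = 0 := by
      have := Polynomial.isRoot_of_mem_roots hμ
      exact this
    -- μ ∈ spectrum (-A), hence -μ ∈ spectrum A, hence μ.re > 0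
    have hspecC : μ ∈ spectrum ℂ (-A) := by
      rw [spectrum.mem_iff]
      intro hc
      rw [Matrix.isUnit_iff_isUnit_det] at hc
      rw [eval_charpoly_aux] at hμroot
      rw [hμroot] at hc
      exact (not_isUnit_zero hc : False)
    have hneg : -μ ∈ spectrum ℂ A := by
      rw [spectrum.mem_iff] at hspecC ⊢
      intro hc
      apply hspecC
      have : (algebraMap ℂ (Matrix n n ℂ)) μ - (-A)
          = -((algebraMap ℂ (Matrix n n ℂ)) (-μ) - A) := by
        simp [Algebra.algebraMap_eq_smul_one]
        module
      rw [this]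
      exact hc.neg
    have hre : 0 < μ.re := by
      have := hA _ hneg
      simpa using this
    -- Now show the factor is a unit
    have hnotmem : μ ∉ spectrum ℂ Aᵀ := by
      intro hmem
      have := hA _ (spectrum_transpose_subset A hmem)
      linarith
    rw [spectrum.mem_iff, not_not] at hnotmem
    have : aeval Aᵀ (X - C μ) = -((algebraMap ℂ (Matrix n n ℂ)) μ - Aᵀ) := by
      simp [Algebra.algebraMap_eq_smul_one]
    rw [this]
    exact hnotmem.neg
  -- conclude by induction on the multiset of roots
  rw [hfac]
  generalize hs : (-A).charpoly.roots = s at hroot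
  clear hfac hs
  induction s using Multiset.induction_on with
  | empty => simp
  | cons a s ih =>
    rw [Multiset.map_cons, Multiset.prod_cons, _root_.map_mul]
    exact (hroot a (Multiset.mem_cons_self a s)).mul
      (ih fun x hx => hroot x (Multiset.mem_cons_of_mem hx))

private lemma lyap_inj (A : Matrix n n ℝ)
    (hA : ∀ z ∈ spectrum ℂ (A.map Complex.ofReal), z.re < 0)
    (X : Matrix n n ℝ) (h : Aᵀ * X + X * A = 0) : X = 0 := by
  set f : Matrix n n ℝ →+* Matrix n n ℂ := Complex.ofRealHom.mapMatrix with hf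
  set Ac : Matrix n n ℂ := A.map Complex.ofReal with hAc
  set Xc : Matrix n n ℂ := X.map Complex.ofReal with hXc
  have hmapA : f A = Ac := rfl
  have hmapX : f X = Xc := rfl
  have hmapAT : f Aᵀ = Acᵀ := by
    simp [hf, RingHom.mapMatrix_apply, hAc, Matrix.transpose_map]
    rfl
  have hc : Acᵀ * Xc + Xc * Ac = 0 := by
    have := congrArg f h
    rw [map_add, _root_.map_mul, _root_.map_mul, map_zero, hmapAT, hmapX, hmapA] at this
    exact this
  have hcomm : Acᵀ * Xc = Xc * (-Ac) := by
    rw [mul_neg]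
    exact eq_neg_of_add_eq_zero_left hc
  have hzero := aeval_comm_aux Acᵀ (-Ac) Xc hcomm ((-Ac).charpoly)
  rw [Matrix.aeval_self_charpoly, mul_zero] at hzero
  have hu := key_unit Ac hA
  obtain ⟨u, hu⟩ := hu
  have hXc0 : Xc = 0 := by
    calc Xc = ((↑u⁻¹ : Matrix n n ℂ) * ↑u) * Xc := by
          rw [Units.inv_mul, one_mul]
      _ = (↑u⁻¹ : Matrix n n ℂ) * ((aeval Acᵀ ((-Ac).charpoly)) * Xc) := by
          rw [mul_assoc, hu]
      _ = 0 := by rw [hzero, mul_zero]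
  ext i j
  have : Xc i j = 0 := by rw [hXc0]; rfl
  rw [hXc, Matrix.map_apply] at this
  exact_mod_cast this

/-- The Lyapunov linear map `X ↦ Aᵀ X + X A`. -/
private def lyapMap (A : Matrix n n ℝ) : Matrix n n ℝ →ₗ[ℝ] Matrix n n ℝ where
  toFun X := Aᵀ * X + X * A
  map_add' X Y := by noncomm_ring
  map_smul' c X := by simp [Matrix.mul_smul, Matrix.smul_mul, smul_add]

private lemma lyap_bij (A : Matrix n n ℝ)
    (hA : ∀ z ∈ spectrum ℂ (A.map Complex.ofReal), z.re < 0) :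
    Function.Bijective (lyapMap A) := by
  have hinj : Function.Injective (lyapMap A) := by
    rw [← LinearMap.ker_eq_bot, LinearMap.ker_eq_bot']
    intro X hX
    exact lyap_inj A hA X hX
  exact ⟨hinj, (LinearMap.injective_iff_surjective).mp hinj⟩

private lemma spec_path (A : Matrix n n ℝ)
    (hA : ∀ z ∈ spectrum ℂ (A.map Complex.ofReal), z.re < 0)
    (s : ℝ) (hs0 : 0 ≤ s) (hs1 : s ≤ 1) :
    ∀ z ∈ spectrum ℂ ((s • A - (1 - s) • 1).map Complex.ofReal), z.re < 0 := by
  intro z hz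
  have hmap : (s • A - (1 - s) • 1).map Complex.ofReal
      = (s : ℂ) • (A.map Complex.ofReal) - ((1 - s : ℝ) : ℂ) • 1 := by
    ext i j
    by_cases h : i = j <;>
      simp [Matrix.map_apply, Matrix.sub_apply, Matrix.smul_apply, Matrix.one_apply, h]
  rw [hmap, spectrum.mem_iff] at hz
  set c : ℝ := 1 - s with hc
  have hc0 : 0 ≤ c := by simp [hc]; linarith
  have key : ∀ w : ℂ, w ≠ 0 → IsUnit (w • (1 : Matrix n n ℂ)) := by
    intro w hw
    rw [← Algebra.algebraMap_eq_smul_one]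
    exact (hw.isUnit).map (algebraMap ℂ (Matrix n n ℂ))
  rcases eq_or_lt_of_le hs0 with hs | hs
  · -- s = 0 : matrix is (z+c)•1, so z = -c = -1
    have h1 : (algebraMap ℂ (Matrix n n ℂ)) z - ((s : ℂ) • A.map Complex.ofReal - ((c : ℝ) : ℂ) • 1)
        = (z + (c : ℂ)) • (1 : Matrix n n ℂ) := by
      rw [← hs]
      simp only [Complex.ofReal_zero, zero_smul, zero_sub, sub_neg_eq_add,
        Algebra.algebraMap_eq_smul_one]
      module
    rw [h1] at hz
    have hzc : z + (c : ℂ) = 0 := by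
      by_contra h0
      exact hz (key _ h0)
    have : z = -(c : ℂ) := by linear_combination hzc
    have : z.re = -c := by rw [this]; simp
    rw [this, hc, ← hs]
    norm_num
  · -- s > 0
    set w : ℂ := (z + (c : ℂ)) / (s : ℂ) with hw
    have hsne : (s : ℂ) ≠ 0 := by
      simp only [ne_eq, Complex.ofReal_eq_zero]
      linarith
    have hwmem : w ∈ spectrum ℂ (A.map Complex.ofReal) := by
      rw [spectrum.mem_iff]
      intro hunit
      apply hz
      have hsw : (s : ℂ) * w = z + (c : ℂ) := by
        rw [hw]; field_simp
      have h2 : (algebraMap ℂ (Matrix n n ℂ)) z - ((s : ℂ) • A.map Complex.ofReal - ((c : ℝ) : ℂ) • 1)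
          = ((s : ℂ) • (1 : Matrix n n ℂ)) * ((algebraMap ℂ (Matrix n n ℂ)) w - A.map Complex.ofReal) := by
        have e1 : ((s : ℂ) • (1 : Matrix n n ℂ)) * (w • (1 : Matrix n n ℂ) - A.map Complex.ofReal)
            = ((s : ℂ) * w) • (1 : Matrix n n ℂ) - (s : ℂ) • A.map Complex.ofReal := by
          rw [Matrix.mul_sub, smul_mul_assoc, one_mul, smul_mul_assoc, one_mul, smul_smul]
        rw [Algebra.algebraMap_eq_smul_one, Algebra.algebraMap_eq_smul_one, e1, hsw, add_smul]
        abel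
      rw [h2]
      exact (key _ hsne).mul hunit
    have hwre := hA w hwmem
    have : w.re = (z.re + c) / s := by
      rw [hw]
      rw [Complex.div_re]
      simp [Complex.normSq_ofReal]
      field_simp
    rw [this] at hwre
    have : z.re + c < 0 := by
      by_contra hcon
      push_neg at hcon
      have := div_nonneg hcon (le_of_lt hs)
      linarith
    linarith

private lemma herm_of_symm (X : Matrix n n ℝ) (h : Xᵀ = X) : X.IsHermitian := by
  have hc : Xᴴ = Xᵀ := by ext i j; simp [Matrix.conjTranspose_apply]
  rw [Matrix.IsHermitian, hc, h]

attribute [local instance] Matrix.normedAddCommGroup Matrix.normedSpace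

private lemma continuous_quadform (x : n → ℝ) :
    Continuous fun Y : Matrix n n ℝ => x ⬝ᵥ Y *ᵥ x := by
  simp only [dotProduct, Matrix.mulVec]
  refine continuous_finset_sum _ fun i _ => Continuous.mul continuous_const ?_
  refine continuous_finset_sum _ fun j _ => Continuous.mul ?_ continuous_const
  exact (continuous_apply j).comp (continuous_apply i)

private lemma isOpen_N :
    IsOpen {Y : Matrix n n ℝ | ∃ x : n → ℝ, x ⬝ᵥ Y *ᵥ x < 0} := by
  have : {Y : Matrix n n ℝ | ∃ x : n → ℝ, x ⬝ᵥ Y *ᵥ x < 0}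
      = ⋃ x : n → ℝ, {Y | x ⬝ᵥ Y *ᵥ x < 0} := by
    ext Y; simp
  rw [this]
  exact isOpen_iUnion fun x => isOpen_lt (continuous_quadform x) continuous_const

private lemma quadform_bound (E : Matrix n n ℝ) (x : n → ℝ) :
    |x ⬝ᵥ E *ᵥ x| ≤ ‖E‖ * (Fintype.card n : ℝ)^2 * ‖x‖^2 := by
  have hb : ∀ i j, |x i * (E i j * x j)| ≤ ‖E‖ * (‖x‖ * ‖x‖) := by
    intro i j
    rw [abs_mul, abs_mul]
    have h1 : |x i| ≤ ‖x‖ := norm_le_pi_norm x i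
    have h2 : |x j| ≤ ‖x‖ := norm_le_pi_norm x j
    have h3 : |E i j| ≤ ‖E‖ := Matrix.norm_entry_le_entrywise_sup_norm E
    have hxnn : (0:ℝ) ≤ ‖x‖ := norm_nonneg x
    calc |x i| * (|E i j| * |x j|) ≤ ‖x‖ * (‖E‖ * ‖x‖) := by
          apply mul_le_mul h1 (mul_le_mul h3 h2 (abs_nonneg _) (norm_nonneg _))
            (mul_nonneg (abs_nonneg _) (abs_nonneg _)) hxnn
      _ = ‖E‖ * (‖x‖ * ‖x‖) := by ring
  calc |x ⬝ᵥ E *ᵥ x| = |∑ i, ∑ j, x i * (E i j * x j)| := by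
        simp only [dotProduct, Matrix.mulVec, Finset.mul_sum]
    _ ≤ ∑ i, ∑ j, |x i * (E i j * x j)| := by
        refine (Finset.abs_sum_le_sum_abs _ _).trans ?_
        exact Finset.sum_le_sum fun i _ => Finset.abs_sum_le_sum_abs _ _
    _ ≤ ∑ _i : n, ∑ _j : n, ‖E‖ * (‖x‖ * ‖x‖) := by
        exact Finset.sum_le_sum fun i _ => Finset.sum_le_sum fun j _ => hb i j
    _ = ‖E‖ * (Fintype.card n : ℝ)^2 * ‖x‖^2 := by
        simp [Finset.sum_const, Finset.card_univ]
        ring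

private lemma continuous_quadform_vec (Y : Matrix n n ℝ) :
    Continuous fun x : n → ℝ => x ⬝ᵥ Y *ᵥ x := by
  simp only [dotProduct, Matrix.mulVec]
  refine continuous_finset_sum _ fun i _ => Continuous.mul (continuous_apply i) ?_
  exact continuous_finset_sum _ fun j _ => Continuous.mul continuous_const (continuous_apply j)

private lemma isOpen_P [Nonempty n] :
    IsOpen {Y : Matrix n n ℝ | ∀ x : n → ℝ, x ≠ 0 → 0 < x ⬝ᵥ Y *ᵥ x} := by
  refine Metric.isOpen_iff.mpr ?_
  intro Y hY
  have hsne : (Metric.sphere (0 : n → ℝ) 1).Nonempty := NormedSpace.sphere_nonempty.mpr zero_le_one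
  obtain ⟨u, huS, humin⟩ := (isCompact_sphere (0 : n → ℝ) 1).exists_isMinOn hsne
    (continuous_quadform_vec Y).continuousOn
  have hu1 : ‖u‖ = 1 := by simpa using huS
  have hune : u ≠ 0 := by intro h; rw [h] at hu1; simp at hu1
  set m : ℝ := u ⬝ᵥ Y *ᵥ u with hm
  have hmpos : 0 < m := hY u hune
  set C : ℝ := (Fintype.card n : ℝ)^2 with hC
  have hCpos : 0 < C := by
    have : 0 < Fintype.card n := Fintype.card_pos
    positivity
  refine ⟨m / (2 * C), by positivity, ?_⟩
  intro Z hZ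
  rw [Metric.mem_ball, dist_eq_norm] at hZ
  intro x hx
  -- lower bound for the quadratic form of Y
  have hxn : (0:ℝ) < ‖x‖ := norm_pos_iff.mpr hx
  have hscale : x ⬝ᵥ Y *ᵥ x ≥ m * ‖x‖^2 := by
    set u' : n → ℝ := ‖x‖⁻¹ • x with hu'
    have hu'S : u' ∈ Metric.sphere (0 : n → ℝ) 1 := by
      simp [hu', norm_smul, abs_of_pos (inv_pos.mpr hxn), inv_mul_cancel₀ (ne_of_gt hxn)]
    have hmin := humin hu'S
    have hexp : u' ⬝ᵥ Y *ᵥ u' = ‖x‖⁻¹ * (‖x‖⁻¹ * (x ⬝ᵥ Y *ᵥ x)) := by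
      rw [hu', Matrix.mulVec_smul, smul_dotProduct, dotProduct_smul]
      simp [smul_eq_mul]
    have : m ≤ ‖x‖⁻¹ * (‖x‖⁻¹ * (x ⬝ᵥ Y *ᵥ x)) := by
      rw [← hexp]; exact hmin
    have h2 := mul_le_mul_of_nonneg_left this (le_of_lt (mul_pos hxn hxn))
    calc x ⬝ᵥ Y *ᵥ x = (‖x‖ * ‖x‖) * (‖x‖⁻¹ * (‖x‖⁻¹ * (x ⬝ᵥ Y *ᵥ x))) := by
          field_simp
      _ ≥ (‖x‖ * ‖x‖) * m := h2
      _ = m * ‖x‖^2 := by ring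
  have hdiff := quadform_bound (Z - Y) x
  have hZY : ‖Z - Y‖ * C * ‖x‖^2 < m / 2 * ‖x‖^2 := by
    have h1 : ‖Z - Y‖ * C < m / 2 := by
      calc ‖Z - Y‖ * C < m / (2 * C) * C := mul_lt_mul_of_pos_right hZ hCpos
        _ = m / 2 := by field_simp
    have := mul_lt_mul_of_pos_right h1 (by positivity : (0:ℝ) < ‖x‖^2)
    linarith
  have hsplit : x ⬝ᵥ Z *ᵥ x = x ⬝ᵥ Y *ᵥ x + x ⬝ᵥ (Z - Y) *ᵥ x := by
    rw [Matrix.sub_mulVec, dotProduct_sub]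
    ring
  have habs : |x ⬝ᵥ (Z - Y) *ᵥ x| < m / 2 * ‖x‖^2 := lt_of_le_of_lt hdiff (by
    calc ‖Z - Y‖ * C * ‖x‖^2 = ‖Z - Y‖ * C * ‖x‖^2 := rfl
      _ < m / 2 * ‖x‖^2 := hZY)
  have := abs_lt.mp habs
  have hfin : 0 < m * ‖x‖^2 - m / 2 * ‖x‖^2 := by nlinarith
  rw [hsplit]
  nlinarith [hscale]

private lemma lyap_posdef [Nonempty n] (A : Matrix n n ℝ)
    (hA : ∀ z ∈ spectrum ℂ (A.map Complex.ofReal), z.re < 0)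
    (W' : Matrix n n ℝ) (hW' : W'.PosDef)
    (X : Matrix n n ℝ) (hX : Aᵀ * X + X * A = -W') : X.PosDef := by
  classical
  have hW'symm : W'ᵀ = W' := by
    have h := hW'.1
    have h2 : W'ᵀ = W'ᴴ := by ext i j; simp [Matrix.conjTranspose_apply]
    rw [h2, h]
  -- the family of Lyapunov operators along the path s ↦ s•A - (1-s)•1
  set As : ℝ → Matrix n n ℝ := fun s => s • A - (1 - s) • 1 with hAs
  set F : ℝ → (Matrix n n ℝ →L[ℝ] Matrix n n ℝ) :=
    fun s => LinearMap.toContinuousLinearMap (lyapMap (As s)) with hF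
  have hFapp : ∀ s X', F s X' = (As s)ᵀ * X' + X' * (As s) := fun s X' => rfl
  have hspec : ∀ s ∈ Set.Icc (0:ℝ) 1,
      ∀ z ∈ spectrum ℂ ((As s).map Complex.ofReal), z.re < 0 :=
    fun s hs => spec_path A hA s hs.1 hs.2
  have hbij : ∀ s ∈ Set.Icc (0:ℝ) 1, Function.Bijective (lyapMap (As s)) :=
    fun s hs => lyap_bij _ (hspec s hs)
  -- linearity of F in s
  have hFlin : F = fun s => s • (LinearMap.toContinuousLinearMap (lyapMap A))
      + (2*s - 2) • (1 : Matrix n n ℝ →L[ℝ] Matrix n n ℝ) := by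
    funext s
    apply ContinuousLinearMap.ext
    intro X'
    rw [hFapp]
    simp only [ContinuousLinearMap.add_apply, ContinuousLinearMap.smul_apply,
      ContinuousLinearMap.one_apply]
    have : LinearMap.toContinuousLinearMap (lyapMap A) X' = Aᵀ * X' + X' * A := rfl
    rw [this, hAs]
    simp only [Matrix.transpose_sub, Matrix.transpose_smul, Matrix.transpose_one]
    rw [Matrix.sub_mul, Matrix.mul_sub, Matrix.smul_mul, Matrix.smul_mul, Matrix.mul_smul,
      Matrix.mul_smul, Matrix.one_mul, Matrix.mul_one]
    module
  have hFcont : Continuous F := by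
    rw [hFlin]
    exact (continuous_id.smul continuous_const).add
      (((continuous_const.mul continuous_id).sub continuous_const).smul continuous_const)
  -- units
  have hunit : ∀ s ∈ Set.Icc (0:ℝ) 1, IsUnit (F s) := by
    intro s hs
    set e := LinearEquiv.ofBijective (lyapMap (As s)) (hbij s hs) with he
    refine ⟨⟨F s, LinearMap.toContinuousLinearMap (e.symm : _ →ₗ[ℝ] _), ?_, ?_⟩, rfl⟩
    · apply ContinuousLinearMap.ext
      intro X'
      rw [ContinuousLinearMap.mul_apply, ContinuousLinearMap.one_apply]
      show (lyapMap (As s)) ((e.symm : _ →ₗ[ℝ] _) X') = X'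
      exact e.apply_symm_apply X'
    · apply ContinuousLinearMap.ext
      intro X'
      rw [ContinuousLinearMap.mul_apply, ContinuousLinearMap.one_apply]
      show (e.symm : _ →ₗ[ℝ] _) ((lyapMap (As s)) X') = X'
      exact e.symm_apply_apply X'
  -- the solution path
  set g : ℝ → Matrix n n ℝ := fun s => Ring.inverse (F s) (-W') with hg
  have hgsolve : ∀ s ∈ Set.Icc (0:ℝ) 1, (As s)ᵀ * (g s) + (g s) * (As s) = -W' := by
    intro s hs
    obtain ⟨u, hu⟩ := hunit s hs
    have : F s (g s) = -W' := by
      rw [hg]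
      simp only
      rw [← hu, Ring.inverse_unit]
      have : (↑u : Matrix n n ℝ →L[ℝ] Matrix n n ℝ) ((↑u⁻¹ : Matrix n n ℝ →L[ℝ] Matrix n n ℝ) (-W'))
          = ((↑u * ↑u⁻¹ : Matrix n n ℝ →L[ℝ] Matrix n n ℝ)) (-W') := rfl
      rw [this, u.mul_inv, ContinuousLinearMap.one_apply]
    rw [← hFapp]
    exact this
  have hgcont : ∀ s ∈ Set.Icc (0:ℝ) 1, ContinuousAt g s := by
    intro s hs
    obtain ⟨u, hu⟩ := hunit s hs
    have h1 : ContinuousAt (Ring.inverse ∘ F) s := by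
      apply ContinuousAt.comp
      · rw [← hu]; exact @NormedRing.inverse_continuousAt _ ContinuousLinearMap.toNormedRing _ u
      · exact hFcont.continuousAt
    exact ((ContinuousLinearMap.apply ℝ (Matrix n n ℝ) (-W')).continuous.continuousAt).comp h1
  -- uniqueness of solutions
  have huniq : ∀ s ∈ Set.Icc (0:ℝ) 1, ∀ Y, (As s)ᵀ * Y + Y * (As s) = -W' → Y = g s := by
    intro s hs Y hY
    apply (hbij s hs).injective
    show lyapMap (As s) Y = lyapMap (As s) (g s)
    have h1 : lyapMap (As s) Y = -W' := hY
    have h2 : lyapMap (As s) (g s) = -W' := hgsolve s hs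
    rw [h1, h2]
  -- symmetry of g s
  have hgsymm : ∀ s ∈ Set.Icc (0:ℝ) 1, (g s)ᵀ = g s := by
    intro s hs
    apply huniq s hs
    have := congrArg Matrix.transpose (hgsolve s hs)
    rw [Matrix.transpose_add, Matrix.transpose_mul, Matrix.transpose_mul,
      Matrix.transpose_transpose, Matrix.transpose_neg, hW'symm] at this
    rw [← this]
    abel
  -- dichotomy: each g s is either in P or in N
  set P : Set (Matrix n n ℝ) := {Y | ∀ x : n → ℝ, x ≠ 0 → 0 < x ⬝ᵥ Y *ᵥ x} with hP
  set N : Set (Matrix n n ℝ) := {Y | ∃ x : n → ℝ, x ⬝ᵥ Y *ᵥ x < 0} with hN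
  have hdichot : ∀ s ∈ Set.Icc (0:ℝ) 1, g s ∉ P → g s ∈ N := by
    intro s hs hgP
    by_contra hgN
    rw [hN, Set.mem_setOf_eq] at hgN
    push_neg at hgN
    -- so the form is nonneg everywhere, and g s is PSD
    have hpsd : (g s).PosSemidef := by
      refine Matrix.PosSemidef.of_dotProduct_mulVec_nonneg (herm_of_symm _ (hgsymm s hs)) fun x => ?_
      simpa using hgN x
    -- not in P gives a nonzero kernel vector
    rw [hP, Set.mem_setOf_eq] at hgP
    push_neg at hgP
    obtain ⟨x, hxne, hxform⟩ := hgP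
    have hxzero : x ⬝ᵥ (g s) *ᵥ x = 0 := le_antisymm hxform (by simpa using hgN x)
    have hker : (g s) *ᵥ x = 0 := by
      have := (hpsd.dotProduct_mulVec_zero_iff x).mp (by simpa using hxzero)
      exact this
    -- contradiction with W' positive definite
    have heq := hgsolve s hs
    have hform : x ⬝ᵥ ((As s)ᵀ * (g s) + (g s) * (As s)) *ᵥ x = x ⬝ᵥ (-W') *ᵥ x := by
      rw [heq]
    have hzero1 : x ⬝ᵥ ((As s)ᵀ * (g s)) *ᵥ x = 0 := by
      rw [← Matrix.mulVec_mulVec, Matrix.dotProduct_mulVec, Matrix.vecMul_transpose, hker,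
        dotProduct_zero]
    have hzero2 : x ⬝ᵥ ((g s) * (As s)) *ᵥ x = 0 := by
      rw [← Matrix.mulVec_mulVec, Matrix.dotProduct_mulVec]
      have : x ᵥ* (g s) = (g s) *ᵥ x := by
        rw [← hgsymm s hs, Matrix.vecMul_transpose, hgsymm s hs]
      rw [this, hker, zero_dotProduct]
    rw [Matrix.add_mulVec, dotProduct_add, hzero1, hzero2] at hform
    have hWpos := hW'.dotProduct_mulVec_pos hxne
    simp only [star_trivial] at hWpos
    rw [Matrix.neg_mulVec, dotProduct_neg] at hform
    linarith
  -- clopen argument on [0,1]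
  haveI : PreconnectedSpace (Set.Icc (0:ℝ) 1) := Subtype.preconnectedSpace isPreconnected_Icc
  set G : Set.Icc (0:ℝ) 1 → Matrix n n ℝ := fun s => g s.val with hG
  have hGcont : Continuous G := by
    rw [continuous_iff_continuousAt]
    intro s
    exact (hgcont s.val s.prop).comp continuousAt_subtype_val
  have hPopen : IsOpen (G ⁻¹' P) := (isOpen_P).preimage hGcont
  have hNopen : IsOpen (G ⁻¹' N) := (isOpen_N).preimage hGcont
  have hcompl : (G ⁻¹' P)ᶜ = G ⁻¹' N := by
    ext s
    simp only [Set.mem_compl_iff, Set.mem_preimage]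
    constructor
    · intro h
      exact hdichot s.val s.prop h
    · intro h hp
      obtain ⟨x, hx⟩ := h
      have hxne : x ≠ 0 := by
        intro h0
        rw [h0] at hx
        simp at hx
      exact absurd (hp x hxne) (by linarith)
  have hclopen : IsClopen (G ⁻¹' P) := by
    constructor
    · rw [← isOpen_compl_iff, hcompl]
      exact hNopen
    · exact hPopen
  have h0mem : (⟨0, by norm_num⟩ : Set.Icc (0:ℝ) 1) ∈ G ⁻¹' P := by
    have h0Icc : (0:ℝ) ∈ Set.Icc (0:ℝ) 1 := by norm_num
    have hsol0 : (As 0)ᵀ * ((2:ℝ)⁻¹ • W') + ((2:ℝ)⁻¹ • W') * (As 0) = -W' := by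
      rw [hAs]
      simp only [zero_smul, sub_zero, one_smul, zero_sub]
      rw [Matrix.transpose_neg, Matrix.transpose_one]
      rw [Matrix.neg_mul, Matrix.mul_neg, Matrix.one_mul, Matrix.mul_one]
      rw [← neg_add, ← two_smul ℝ]
      rw [smul_smul]
      norm_num
    have := huniq 0 h0Icc _ hsol0
    show g 0 ∈ P
    rw [← this, hP]
    intro x hx
    rw [Matrix.smul_mulVec, dotProduct_smul]
    have := hW'.dotProduct_mulVec_pos hx
    simp only [star_trivial] at this
    positivity
  have huniv : G ⁻¹' P = Set.univ := by
    rcases isClopen_iff.mp hclopen with h | h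
    · exact absurd (h ▸ h0mem) (Set.notMem_empty _)
    · exact h
  have h1mem : g 1 ∈ P := by
    have : (⟨1, by norm_num⟩ : Set.Icc (0:ℝ) 1) ∈ G ⁻¹' P := huniv ▸ Set.mem_univ _
    exact this
  -- finally X = g 1
  have hX1 : X = g 1 := by
    apply huniq 1 (by norm_num)
    rw [hAs]
    simp only [one_smul, sub_self, zero_smul, sub_zero]
    exact hX
  refine Matrix.PosDef.of_dotProduct_mulVec_pos (herm_of_symm X ?_) fun x hx => ?_
  · rw [hX1]; exact hgsymm 1 (by norm_num)
  · rw [hX1]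
    simpa using h1mem x hx

/-- Lemma 5.2. Let `W` be a symmetric positive semidefinite matrix
with `⟨x, Wx⟩ ≥ a|p|²` for some `a > 0` (`x = (q,p)`), and `U` a matrix whose complex
eigenvalues all have negative real part and whose lower-left block `U₂₁` is invertible.
Then there is a unique matrix `X` with `Uᵀ X + X U = −W`, and `X` is symmetric positive
definite. -/
theorem stmt13 (d : ℕ) (hd : 1 ≤ d)
    (W : Matrix (Fin d ⊕ Fin d) (Fin d ⊕ Fin d) ℝ)
    (hWsymm : Wᵀ = W) (hWpsd : W.PosSemidef)
    (a : ℝ) (ha : 0 < a)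
    (hW : ∀ x : (Fin d ⊕ Fin d) → ℝ,
      a * ∑ i : Fin d, (x (Sum.inr i)) ^ 2 ≤ x ⬝ᵥ W.mulVec x)
    (U : Matrix (Fin d ⊕ Fin d) (Fin d ⊕ Fin d) ℝ)
    (hUspec : ∀ z ∈ spectrum ℂ
        ((U.map Complex.ofReal : Matrix (Fin d ⊕ Fin d) (Fin d ⊕ Fin d) ℂ)), z.re < 0)
    (hU21 : IsUnit (U.toBlocks₂₁)) :
    ∃ X : Matrix (Fin d ⊕ Fin d) (Fin d ⊕ Fin d) ℝ,
      (Uᵀ * X + X * U = -W ∧ X.PosDef) ∧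
      ∀ Y : Matrix (Fin d ⊕ Fin d) (Fin d ⊕ Fin d) ℝ, Uᵀ * Y + Y * U = -W → Y = X := by
  classical
  haveI : Nonempty (Fin d ⊕ Fin d) := ⟨Sum.inl ⟨0, hd⟩⟩
  have hbij := lyap_bij U hUspec
  -- unique solution X for -W
  obtain ⟨X, hXsol⟩ := hbij.surjective (-W)
  have hXeq : Uᵀ * X + X * U = -W := hXsol
  have huniq : ∀ Y : Matrix (Fin d ⊕ Fin d) (Fin d ⊕ Fin d) ℝ, Uᵀ * Y + Y * U = -W → Y = X := by
    intro Y hY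
    apply hbij.injective
    show lyapMap U Y = lyapMap U X
    have h1 : lyapMap U Y = -W := hY
    have h2 : lyapMap U X = -W := hXeq
    rw [h1, h2]
  -- symmetry of X
  have hXsymm : Xᵀ = X := by
    apply huniq
    have := congrArg Matrix.transpose hXeq
    rw [Matrix.transpose_add, Matrix.transpose_mul, Matrix.transpose_mul,
      Matrix.transpose_transpose, Matrix.transpose_neg, hWsymm] at this
    rw [← this]
    abel
  -- solutions for perturbed right-hand sides are positive definite
  have hpert : ∀ ε : ℝ, 0 < ε → ∀ Z : Matrix (Fin d ⊕ Fin d) (Fin d ⊕ Fin d) ℝ,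
      Uᵀ * Z + Z * U = -(W + ε • 1) → Z.PosDef := by
    intro ε hε Z hZ
    have hPD1 : ((ε : ℝ) • (1 : Matrix (Fin d ⊕ Fin d) (Fin d ⊕ Fin d) ℝ)).PosDef := by
      rw [Matrix.smul_one_eq_diagonal]
      exact Matrix.PosDef.diagonal fun i => hε
    exact lyap_posdef U hUspec _ (Matrix.PosDef.posSemidef_add hWpsd hPD1) Z hZ
  -- the solution for -(W + 1)
  obtain ⟨X₁, hX₁sol⟩ := hbij.surjective (-(W + (1:ℝ) • 1))
  have hX₁eq : Uᵀ * X₁ + X₁ * U = -(W + (1:ℝ) • 1) := hX₁sol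
  -- combination solves for -(W + ε•1)
  have hcomb : ∀ ε : ℝ, Uᵀ * ((1-ε) • X + ε • X₁) + ((1-ε) • X + ε • X₁) * U
      = -(W + ε • 1) := by
    intro ε
    have h1 := hXeq
    have h2 := hX₁eq
    rw [Matrix.mul_add, Matrix.add_mul, Matrix.mul_smul, Matrix.mul_smul,
      Matrix.smul_mul, Matrix.smul_mul]
    have e1 : (1-ε) • (Uᵀ * X) + ε • (Uᵀ * X₁) + ((1-ε) • (X * U) + ε • (X₁ * U))
        = (1-ε) • (Uᵀ * X + X * U) + ε • (Uᵀ * X₁ + X₁ * U) := by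
      rw [smul_add, smul_add]; abel
    rw [e1, h1, h2]
    module
  -- positive semidefiniteness of X
  have hXpsd : ∀ x : (Fin d ⊕ Fin d) → ℝ, 0 ≤ x ⬝ᵥ X *ᵥ x := by
    intro x
    by_cases hx : x = 0
    · rw [hx]; simp
    have hval : ∀ ε : ℝ, 0 < ε → ε ≤ 1 →
        0 < (1-ε) * (x ⬝ᵥ X *ᵥ x) + ε * (x ⬝ᵥ X₁ *ᵥ x) := by
      intro ε hε hε1
      have hPD := hpert ε hε _ (hcomb ε)
      have := hPD.dotProduct_mulVec_pos hx
      simp only [star_trivial] at this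
      rw [Matrix.add_mulVec, dotProduct_add, Matrix.smul_mulVec,
        Matrix.smul_mulVec, dotProduct_smul, dotProduct_smul] at this
      simpa using this
    set q := x ⬝ᵥ X *ᵥ x with hq
    set r := x ⬝ᵥ X₁ *ᵥ x with hr
    by_contra hneg
    push_neg at hneg
    have hr1 := hval 1 one_pos le_rfl
    simp only [sub_self, zero_mul, one_mul, zero_add] at hr1
    -- r > 0, q < 0
    have hrq : 0 < r - q := by linarith
    set ε₀ : ℝ := -q / (2 * (r - q)) with hε₀
    have hε₀pos : 0 < ε₀ := by
      apply div_pos (by linarith) (by linarith)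
    have hε₀le : ε₀ ≤ 1 := by
      rw [hε₀, div_le_one (by linarith)]
      linarith
    have := hval ε₀ hε₀pos hε₀le
    have hexp : (1-ε₀) * q + ε₀ * r = q + ε₀ * (r - q) := by ring
    rw [hexp] at this
    have : q + (-q / (2 * (r - q))) * (r - q) < 0 := by
      have h2 : (-q / (2 * (r - q))) * (r - q) = -q / 2 := by
        field_simp
      rw [h2]
      linarith
    linarith
  -- the kernel of X is trivial
  have hker : ∀ v : (Fin d ⊕ Fin d) → ℝ, X *ᵥ v = 0 → v = 0 := by
    intro v hv
    -- quadratic form of W vanishes on v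
    have hWv0 : v ⬝ᵥ W *ᵥ v = 0 := by
      have heq := congrArg (fun M => v ⬝ᵥ M *ᵥ v) hXeq
      have hz1 : v ⬝ᵥ (Uᵀ * X) *ᵥ v = 0 := by
        rw [← Matrix.mulVec_mulVec, Matrix.dotProduct_mulVec, Matrix.vecMul_transpose, hv,
          dotProduct_zero]
      have hz2 : v ⬝ᵥ (X * U) *ᵥ v = 0 := by
        rw [← Matrix.mulVec_mulVec, Matrix.dotProduct_mulVec]
        have : v ᵥ* X = X *ᵥ v := by rw [← hXsymm, Matrix.vecMul_transpose, hXsymm]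
        rw [this, hv, zero_dotProduct]
      rw [Matrix.add_mulVec, dotProduct_add, hz1, hz2, Matrix.neg_mulVec,
        dotProduct_neg] at heq
      linarith [heq]
    -- hence the momentum part of v vanishes
    have hvp : ∀ i : Fin d, v (Sum.inr i) = 0 := by
      intro i
      have h1 := hW v
      rw [hWv0] at h1
      have h2 : ∑ i : Fin d, (v (Sum.inr i))^2 ≤ 0 := by
        by_contra hcon
        push_neg at hcon
        nlinarith
      have h3 : ∑ i : Fin d, (v (Sum.inr i))^2 = 0 := le_antisymm h2 (by positivity)
      have := (Finset.sum_eq_zero_iff_of_nonneg (fun j _ => sq_nonneg (v (Sum.inr j)))).mp h3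
      have := this i (Finset.mem_univ i)
      exact pow_eq_zero_iff (by norm_num) |>.mp this
    -- W v = 0
    have hWv : W *ᵥ v = 0 := by
      have := (hWpsd.dotProduct_mulVec_zero_iff v).mp (by simpa using hWv0)
      exact this
    -- X (U v) = 0
    have hXUv : X *ᵥ (U *ᵥ v) = 0 := by
      have heq := congrArg (fun M => M *ᵥ v) hXeq
      rw [Matrix.add_mulVec, Matrix.neg_mulVec, hWv, neg_zero, ← Matrix.mulVec_mulVec,
        ← Matrix.mulVec_mulVec, hv, Matrix.mulVec_zero] at heq
      simpa using heq
    -- U v also has vanishing momentum part (same argument applied to U v)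
    have hUvp : ∀ i : Fin d, (U *ᵥ v) (Sum.inr i) = 0 := by
      intro i
      -- quadratic form of W vanishes on U v
      have hWUv0 : (U *ᵥ v) ⬝ᵥ W *ᵥ (U *ᵥ v) = 0 := by
        have heq := congrArg (fun M => (U *ᵥ v) ⬝ᵥ M *ᵥ (U *ᵥ v)) hXeq
        have hz1 : (U *ᵥ v) ⬝ᵥ (Uᵀ * X) *ᵥ (U *ᵥ v) = 0 := by
          rw [← Matrix.mulVec_mulVec, Matrix.dotProduct_mulVec, Matrix.vecMul_transpose, hXUv,
            dotProduct_zero]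
        have hz2 : (U *ᵥ v) ⬝ᵥ (X * U) *ᵥ (U *ᵥ v) = 0 := by
          rw [← Matrix.mulVec_mulVec, Matrix.dotProduct_mulVec]
          have : (U *ᵥ v) ᵥ* X = X *ᵥ (U *ᵥ v) := by
            rw [← hXsymm, Matrix.vecMul_transpose, hXsymm]
          rw [this, hXUv, zero_dotProduct]
        rw [Matrix.add_mulVec, dotProduct_add, hz1, hz2, Matrix.neg_mulVec,
          dotProduct_neg] at heq
        have h1 := hW (U *ᵥ v)
        have h2 : (U *ᵥ v) ⬝ᵥ W *ᵥ (U *ᵥ v) ≤ 0 := by linarith [heq]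
        have h3 : 0 ≤ a * ∑ i : Fin d, ((U *ᵥ v) (Sum.inr i))^2 := by positivity
        linarith
      have h1 := hW (U *ᵥ v)
      rw [hWUv0] at h1
      have h2 : ∑ i : Fin d, ((U *ᵥ v) (Sum.inr i))^2 ≤ 0 := by nlinarith
      have h3 : ∑ i : Fin d, ((U *ᵥ v) (Sum.inr i))^2 = 0 := le_antisymm h2 (by positivity)
      have := (Finset.sum_eq_zero_iff_of_nonneg
        (fun j _ => sq_nonneg ((U *ᵥ v) (Sum.inr j)))).mp h3
      have := this i (Finset.mem_univ i)
      exact pow_eq_zero_iff (by norm_num) |>.mp this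
    -- conclude the position part vanishes using invertibility of U₂₁
    have hblock : U.toBlocks₂₁ *ᵥ (fun k => v (Sum.inl k)) = 0 := by
      funext i
      have h1 := hUvp i
      rw [Matrix.mulVec, dotProduct, Fintype.sum_sum_type] at h1
      simp only [hvp, mul_zero, Finset.sum_const_zero, add_zero] at h1
      rw [Matrix.mulVec, dotProduct]
      simpa [Matrix.toBlocks₂₁] using h1
    have hq0 : (fun k => v (Sum.inl k)) = 0 := by
      obtain ⟨u, hu⟩ := hU21
      have h1 := congrArg (fun w => (↑u⁻¹ : Matrix (Fin d) (Fin d) ℝ) *ᵥ w) hblock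
      simp only [Matrix.mulVec_mulVec, Matrix.mulVec_zero] at h1
      have h2 : ((u⁻¹ : (Matrix (Fin d) (Fin d) ℝ)ˣ) : Matrix (Fin d) (Fin d) ℝ) * U.toBlocks₂₁
          = 1 := by
        rw [← hu]; exact u.inv_mul
      rw [h2, Matrix.one_mulVec] at h1
      exact h1
    funext j
    cases j with
    | inl k => exact congrFun hq0 k
    | inr i => exact hvp i
  -- positive definiteness of X
  have hXpd : X.PosDef := by
    refine Matrix.PosDef.of_dotProduct_mulVec_pos (herm_of_symm X hXsymm) fun x hx => ?_
    simp only [star_trivial]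
    rcases lt_or_eq_of_le (hXpsd x) with h | h
    · exact h
    have hpsd : X.PosSemidef := Matrix.PosSemidef.of_dotProduct_mulVec_nonneg (herm_of_symm X hXsymm) fun y => by simpa using hXpsd y
    have hker0 := (hpsd.dotProduct_mulVec_zero_iff x).mp (by simpa using h.symm)
    exact absurd (hker x hker0) hx
  exact ⟨X, ⟨hXeq, hXpd⟩, huniq⟩
end

section
/- Let u : [0, ∞) → [0, ∞) be a C¹ nonnegative function satisfying u'(t) ≤ a − b u(t) + c u(t)² for all t ≥ 0, where a, b, c > 0 are constants with δ := b² − 4ac > 0. Let α = (b − √δ)/(2c) and β = (b + √δ)/(2c) be the two roots of a − b x + c x² = 0, let M > 1, and suppose u(0) ≤ (M α + β)/(M + 1). Then for all t ≥ 0, u(t) ≤ α + (√δ / (M c)) e^{−√δ t}. -/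
set_option maxHeartbeats 1000000 in
/-- Lemma 5.7, quadratic Gronwall inequality. If a nonnegative `C¹`
function `u` satisfies `u' ≤ a − b u + c u²` with `δ := b² − 4ac > 0`, roots
`α = (b−√δ)/(2c)`, `β = (b+√δ)/(2c)`, `M > 1`, and `u(0) ≤ (Mα+β)/(M+1)`, then
`u(t) ≤ α + (√δ/(Mc)) e^{−√δ t}` for all `t ≥ 0`. -/
theorem stmt14 (a b c : ℝ) (ha : 0 < a) (hb : 0 < b) (hc : 0 < c)
    (δ : ℝ) (hδdef : δ = b ^ 2 - 4 * a * c) (hδ : 0 < δ)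
    (α β : ℝ) (hα : α = (b - Real.sqrt δ) / (2 * c)) (hβ : β = (b + Real.sqrt δ) / (2 * c))
    (M : ℝ) (hM : 1 < M)
    (u u' : ℝ → ℝ)
    (hupos : ∀ t : ℝ, 0 ≤ t → 0 ≤ u t)
    (hderiv : ∀ t : ℝ, 0 ≤ t → HasDerivWithinAt u (u' t) (Set.Ici 0) t)
    (hcont : ContinuousOn u' (Set.Ici 0))
    (hineq : ∀ t : ℝ, 0 ≤ t → u' t ≤ a - b * u t + c * (u t) ^ 2)
    (hu0 : u 0 ≤ (M * α + β) / (M + 1)) :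
    ∀ t : ℝ, 0 ≤ t →
      u t ≤ α + (Real.sqrt δ / (M * c)) * Real.exp (-Real.sqrt δ * t) := by
  set s : ℝ := Real.sqrt δ with hs_def
  have hs : 0 < s := Real.sqrt_pos.mpr hδ
  have hs2 : s ^ 2 = b ^ 2 - 4 * a * c := by
    rw [hs_def, Real.sq_sqrt hδ.le, hδdef]
  have hM0 : 0 < M := lt_trans one_pos hM
  have hM1 : 0 < M + 1 := by linarith
  -- key factorization
  have key : ∀ x : ℝ, a - b * x + c * x ^ 2 = c * (x - α) * (x - β) := by
    intro x
    rw [hα, hβ]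
    field_simp
    nlinarith [hs2]
  have hβα : β = α + s / c := by
    rw [hα, hβ]; field_simp; ring
  set K : ℝ := s / c with hK_def
  have hK : 0 < K := div_pos hs hc
  set D : ℝ → ℝ := fun t => M * Real.exp (s * t) + 1 with hD_def
  have hDpos : ∀ t, 0 < D t := fun t => by
    have := Real.exp_pos (s * t); simp only [hD_def]; nlinarith
  have hDge : ∀ t : ℝ, 0 ≤ t → M + 1 ≤ D t := by
    intro t ht
    have h1 : (1:ℝ) ≤ Real.exp (s * t) := Real.one_le_exp (by positivity)
    simp only [hD_def]; nlinarith
  set ε₀ : ℝ := s * (M - 1) / (c * (M + 1)) with hε₀_def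
  have hε₀ : 0 < ε₀ := by
    apply div_pos <;> nlinarith
  -- the barrier and its derivative
  set B : ℝ → ℝ → ℝ := fun ε t => α + ε + K / D t with hB_def
  set B' : ℝ → ℝ := fun t => -(K * (M * (Real.exp (s * t) * s))) / (D t) ^ 2 with hB'_def
  have hBderiv : ∀ ε t, HasDerivAt (B ε) (B' t) t := by
    intro ε t
    have h1 : HasDerivAt (fun t : ℝ => Real.exp (s * t)) (Real.exp (s * t) * s) t := by
      have h := (Real.hasDerivAt_exp (s * t)).comp t ((hasDerivAt_id t).const_mul s)
      simp only [mul_one] at h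
      exact h
    have h2 : HasDerivAt D (M * (Real.exp (s * t) * s)) t := by
      exact (h1.const_mul M).add_const 1
    have h3 : HasDerivAt (fun t => K / D t)
        ((0 * D t - K * (M * (Real.exp (s * t) * s))) / (D t) ^ 2) t :=
      (hasDerivAt_const t K).div h2 (hDpos t).ne'
    have h4 := (h3.const_add (α + ε))
    simp only [hB_def, hB'_def]
    convert h4 using 1
    · rfl
    · rfl
    ring
  -- initial value
  have h0 : (M * α + β) / (M + 1) = α + K / D 0 := by
    simp only [hD_def]
    rw [mul_zero, Real.exp_zero, mul_one, hβα]
    field_simp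
    ring
  -- purely algebraic identity used at contact points
  have halg : ∀ ε e' : ℝ, 0 < e' →
      c * (ε + (s / c) / (M * e' + 1)) * (ε + (s / c) / (M * e' + 1) - s / c)
        - (-((s / c) * (M * (e' * s))) / (M * e' + 1) ^ 2)
      = c * ε * (ε + 2 * (s / c) / (M * e' + 1) - s / c) := by
    intro ε e' he'
    have hne : M * e' + 1 ≠ 0 := by nlinarith
    field_simp
    ring
  -- main comparison with perturbed barrier
  intro t ht
  have hmain : ∀ ε, 0 < ε → ε < ε₀ → u t ≤ B ε t := by
    intro ε hε hεlt
    have hcomp := image_le_of_deriv_right_lt_deriv_boundary'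
      (f := u) (f' := u') (a := 0) (b := t) (B := B ε) (B' := B')
      (fun x hx => ((hderiv x hx.1).continuousWithinAt).mono
        (Set.Icc_subset_Ici_self))
      (fun x hx => (hderiv x hx.1).mono (Set.Ici_subset_Ici.mpr hx.1))
      (by
        have : u 0 ≤ α + K / D 0 := h0 ▸ hu0
        simp only [hB_def]; linarith)
      (fun x _ => (hBderiv ε x).continuousAt.continuousWithinAt)
      (fun x _ => (hBderiv ε x).hasDerivWithinAt)
      (by
        intro x hx hcontact
        have hx0 : 0 ≤ x := hx.1
        have hDx := hDpos x
        have hDgex := hDge x hx0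
        have h1 : u' x ≤ c * (u x - α) * (u x - β) := (key (u x)) ▸ hineq x hx0
        rw [hcontact] at h1
        refine lt_of_le_of_lt h1 ?_
        have hdiff : c * (B ε x - α) * (B ε x - β) - B' x
            = c * ε * (ε + 2 * K / D x - s / c) := by
          have := halg ε (Real.exp (s * x)) (Real.exp_pos _)
          simp only [hB_def, hB'_def, hK_def, hD_def, hβα]
          convert this using 2 <;> ring
        have hfrac : 2 * K / D x ≤ 2 * K / (M + 1) :=
          div_le_div_of_nonneg_left (by positivity) (by positivity) hDgex
        have hneg : ε + 2 * K / D x - s / c < 0 := by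
          have hsum : ε₀ + 2 * K / (M + 1) = s / c := by
            rw [hε₀_def, hK_def]
            field_simp
            ring
          nlinarith
        have h5 : c * ε * (ε + 2 * K / D x - s / c) < 0 :=
          mul_neg_of_pos_of_neg (mul_pos hc hε) hneg
        have h6 : c * (B ε x - α) * (B ε x - β) - B' x < 0 := by rw [hdiff]; exact h5
        exact sub_lt_zero.mp h6)
    exact hcomp ⟨ht, le_refl t⟩
  -- let ε → 0
  have hlim : u t ≤ α + K / D t := by
    have h2 : ∀ ε : ℝ, 0 < ε → u t ≤ α + K / D t + ε := by
      intro ε hε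
      have hε' : 0 < min ε (ε₀ / 2) := lt_min hε (by linarith)
      have h3 := hmain (min ε (ε₀ / 2)) hε'
        (lt_of_le_of_lt (min_le_right _ _) (by linarith))
      simp only [hB_def] at h3
      have hle : min ε (ε₀ / 2) ≤ ε := min_le_left _ _
      linarith
    exact le_of_forall_pos_le_add h2
  -- final bound
  have hexp : 0 < Real.exp (s * t) := Real.exp_pos _
  have h1 : K / D t ≤ K / (M * Real.exp (s * t)) := by
    apply div_le_div_of_nonneg_left hK.le (by positivity)
    simp only [hD_def]; linarith
  have h2 : K / (M * Real.exp (s * t)) = s / (M * c) * Real.exp (-s * t) := by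
    rw [neg_mul, Real.exp_neg, hK_def]
    field_simp
  linarith
end
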